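/- arXiv:1502.07934 — 6 statements merged into one kernel-verified Lean document; each statement's English description precedes it below -/
import Mathlib

section
/- Let a ≥ 1 be an integer. For every vector c = (c_0, …, c_{a−1}) ∈ ℤ^a with c_0 + ⋯ + c_{a−1} = 0 there exists a unique partition core_a(c) whose beta-set equals B_a(c) = { −a(c_i + n) − i − 1 : 0 ≤ i ≤ a−1, n ∈ ℕ }; this partition is an a-core, and the map c ↦ core_a(c) is a bijection from { c ∈ ℤ^a : c_0 + ⋯ + c_{a−1} = 0 } onto the set of all a-core partitions. -/
/-!
Write every integer uniquely as `-a m - i - 1` with `0 ≤ i < a`: level `m` on runner `i` of the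
`a`-abacus. A set `S ⊆ ℤ` is the beta-set of a (unique) partition iff for some `N` it contains
every integer below `-N` and exactly `N` integers `≥ -N`. As `B_a(c)` consists of the levels
`≥ c_i` on each runner `i`, it has exactly `a M - ∑ c_i` elements `≥ -a M` once `M ≥ c_i`, so it
is a beta-set iff `∑ c_i = 0`.

The hook length of the cell `(i, j)` is `b_i - (j - λ'_j)`, where `b_i = λ_i - i - 1` lies in the
beta-set and `j - λ'_j` does not; every integer outside the beta-set has the form `j - λ'_j`, and
it is `< b_i` exactly when `(i, j)` is a cell. Hence `λ` is an `a`-core iff its beta-set is closed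
under `x ↦ x - a`, i.e. iff on every runner it contains all levels from some lowest one `c_i` on,
which says exactly that it equals `B_a(c)`.
-/

/-- A partition, encoded by its weakly decreasing, eventually zero sequence of parts;
`parts j` is the `(j+1)`-st part `λ_{j+1}`. -/
structure PartitionSeq where
  parts : ℕ → ℕ
  antitone : ∀ ⦃i j : ℕ⦄, i ≤ j → parts j ≤ parts i
  eventually_zero : ∃ N, parts N = 0

namespace PartitionSeq

/-- The beta-set `{λ_j − j : j ≥ 1}` of a partition (with trailing zero parts included). -/
def betaSet (lam : PartitionSeq) : Set ℤ :=
  Set.range fun j : ℕ => (lam.parts j : ℤ) - (j + 1)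

/-- The hook length of the cell in row `i`, column `j` (both 0-indexed): one plus the
number of cells to its right in its row plus the number of cells below it in its column. -/
noncomputable def hook (lam : PartitionSeq) (i j : ℕ) : ℕ :=
  (lam.parts i - j) + Set.ncard {i' : ℕ | i < i' ∧ j < lam.parts i'}

/-- `lam` is an `a`-core: no cell of its Young diagram has hook length `a`. -/
def IsCore (lam : PartitionSeq) (a : ℕ) : Prop :=
  ∀ i j : ℕ, j < lam.parts i → lam.hook i j ≠ a

/-- The size `|λ| = λ₁ + λ₂ + ⋯` of a partition. -/
noncomputable def size (lam : PartitionSeq) : ℕ := ∑ᶠ j, lam.parts j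

/-- The length (number of nonzero parts) of a partition. -/
noncomputable def length (lam : PartitionSeq) : ℕ := Set.ncard {j | 0 < lam.parts j}

/-- The `(j+1)`-st part of the conjugate (transpose) partition. -/
noncomputable def conjParts (lam : PartitionSeq) (j : ℕ) : ℕ :=
  Set.ncard {i | j < lam.parts i}

/-- A partition is self-conjugate if it equals its conjugate. -/
def SelfConjugate (lam : PartitionSeq) : Prop := ∀ j, lam.parts j = lam.conjParts j

end PartitionSeq

/-- The set `B_a(c) = { −a(c_i + n) − i − 1 : 0 ≤ i ≤ a−1, n ∈ ℕ } ⊆ ℤ`. -/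
def Bset (a : ℕ) (c : Fin a → ℤ) : Set ℤ :=
  {x | ∃ (i : Fin a) (n : ℕ), x = -(a : ℤ) * (c i + n) - i.val - 1}

section StrictAntiSeq

variable {b : ℕ → ℤ}

theorem StrictAnti.antitone_add_self (hb : StrictAnti b) : Antitone fun j => b j + j :=
  antitone_nat_of_succ_le fun j => by
    have := hb (Nat.lt_add_one j)
    push_cast
    omega

theorem StrictAnti.exists_setOf_le_eq_Iio (hb : StrictAnti b) (t : ℤ) :
    ∃ n, {k | t ≤ b k} = Set.Iio n := by
  have hex : ∃ k, b k < t :=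
    ⟨(b 0 - t + 1).toNat, by
      have := hb.antitone_add_self (Nat.zero_le (b 0 - t + 1).toNat)
      simp only [CharP.cast_eq_zero, add_zero] at this
      omega⟩
  refine ⟨Nat.find hex, Set.ext fun k =>
    ⟨fun hk => ?_, fun hk => not_lt.1 (Nat.find_min hex hk)⟩⟩
  by_contra hkn
  exact (Nat.find_spec hex).not_ge (hk.trans (hb.antitone (not_lt.1 hkn)))

theorem StrictAnti.apply_succ_of_sub_one_mem_range (hb : StrictAnti b) {j : ℕ}
    (hj : b j - 1 ∈ Set.range b) : b (j + 1) = b j - 1 := by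
  obtain ⟨k, hk⟩ := hj
  have hjk : j < k := hb.lt_iff_gt.1 (by omega)
  have : b k ≤ b (j + 1) := hb.antitone hjk
  have := hb (Nat.lt_add_one j)
  omega

theorem StrictAnti.apply_add_of_Iio_subset_range (hb : StrictAnti b) {t : ℤ}
    (hS : Set.Iio t ⊆ Set.range b) {n : ℕ} (hn : b n < t) (k : ℕ) : b (n + k) = b n - k := by
  induction k with
  | zero => simp
  | succ k ih =>
    rw [← add_assoc, hb.apply_succ_of_sub_one_mem_range (hS (by rw [Set.mem_Iio]; omega)), ih]
    push_cast
    ring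

theorem exists_strictAnti_range_eq {S : Set ℤ} (hbdd : BddAbove S) (hinf : S.Infinite) :
    ∃ b : ℕ → ℤ, StrictAnti b ∧ Set.range b = S := by
  obtain ⟨K, hK⟩ := hbdd
  set p : ℕ → Prop := fun n => K - n ∈ S
  have himage : (fun n : ℕ => K - n) '' {n | p n} = S := by
    refine Set.Subset.antisymm (Set.image_subset_iff.2 fun n hn => hn) fun x hx => ?_
    have hx' : ((K - x).toNat : ℤ) = K - x := Int.toNat_of_nonneg (sub_nonneg.2 (hK hx))
    exact ⟨(K - x).toNat, by simp [p, hx', hx], by simp [hx']⟩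
  have hp : {n | p n}.Infinite := fun hfin => hinf (himage ▸ hfin.image _)
  refine ⟨fun n => K - Nat.nth p n, fun i j hij => ?_, ?_⟩
  · have : Nat.nth p i < Nat.nth p j := Nat.nth_strictMono hp hij
    dsimp only
    omega
  · rw [← himage, ← Nat.range_nth_of_infinite hp, ← Set.range_comp]
    rfl

end StrictAntiSeq

def ChargeZeroAt (S : Set ℤ) (N : ℕ) : Prop :=
  Set.Iio (-(N : ℤ)) ⊆ S ∧ (S ∩ Set.Ici (-(N : ℤ))).encard = N

theorem ChargeZeroAt.bddAbove {S : Set ℤ} {N : ℕ} (h : ChargeZeroAt S N) : BddAbove S :=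
  ((Set.finite_of_encard_eq_coe h.2).bddAbove.union bddAbove_Iio).mono fun x hx => by
    by_cases hxN : -(N : ℤ) ≤ x
    exacts [Or.inl ⟨hx, hxN⟩, Or.inr (not_le.1 hxN)]

theorem StrictAnti.setOf_le_eq_Iio_of_chargeZeroAt {b : ℕ → ℤ} (hb : StrictAnti b) {N : ℕ}
    (h : ChargeZeroAt (Set.range b) N) : {k | -(N : ℤ) ≤ b k} = Set.Iio N := by
  obtain ⟨n, hn⟩ := hb.exists_setOf_le_eq_Iio (-N)
  have himage : b '' {k | -(N : ℤ) ≤ b k} = Set.range b ∩ Set.Ici (-(N : ℤ)) := by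
    ext x
    simp only [Set.mem_image, Set.mem_ofPred_eq, Set.mem_inter_iff, Set.mem_range, Set.mem_Ici]
    constructor
    · rintro ⟨k, hk, rfl⟩
      exact ⟨⟨k, rfl⟩, hk⟩
    · rintro ⟨⟨k, rfl⟩, hk⟩
      exact ⟨k, hk, rfl⟩
  have hcard := h.2
  rw [← himage, hb.injective.injOn.encard_image, hn, ← Finset.coe_Iio,
    Set.encard_coe_eq_coe_finsetCard, Nat.card_Iio, Nat.cast_inj] at hcard
  rw [hn, hcard]

namespace PartitionSeq

variable (lam : PartitionSeq)

def beta (j : ℕ) : ℤ := (lam.parts j : ℤ) - (j + 1)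

theorem betaSet_eq_range_beta : lam.betaSet = Set.range lam.beta := rfl

theorem beta_strictAnti : StrictAnti lam.beta := fun i j hij => by
  have : lam.parts j ≤ lam.parts i := lam.antitone hij.le
  unfold beta
  omega

theorem betaSet_injective : Function.Injective betaSet := by
  intro lam mu h
  have := (StrictMono.range_inj (γ := ℤᵒᵈ) lam.beta_strictAnti mu.beta_strictAnti).1 h
  cases lam
  cases mu
  simp only [mk.injEq]
  funext j
  simpa [beta] using congrFun this j

theorem parts_eq_zero_of_le {N j : ℕ} (hN : lam.parts N = 0) (h : N ≤ j) : lam.parts j = 0 :=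
  Nat.le_zero.1 (hN ▸ lam.antitone h)

theorem chargeZeroAt_betaSet {N : ℕ} (hN : lam.parts N = 0) : ChargeZeroAt lam.betaSet N := by
  have hbeta : ∀ j, N ≤ j → lam.beta j = -(j + 1) := fun j hj => by
    simp [beta, lam.parts_eq_zero_of_le hN hj]
  refine ⟨fun x hx => ⟨(-x - 1).toNat, ?_⟩, ?_⟩
  · rw [Set.mem_Iio] at hx
    change lam.beta _ = x
    rw [hbeta _ (by omega)]
    omega
  · have himage : lam.betaSet ∩ Set.Ici (-(N : ℤ)) = lam.beta '' Set.Iio N := by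
      ext x
      simp only [betaSet_eq_range_beta, Set.mem_inter_iff, Set.mem_range, Set.mem_Ici,
        Set.mem_image, Set.mem_Iio]
      constructor
      · rintro ⟨⟨k, rfl⟩, hk⟩
        refine ⟨k, ?_, rfl⟩
        by_contra hkN
        rw [hbeta k (not_lt.1 hkN)] at hk
        omega
      · rintro ⟨k, hk, rfl⟩
        exact ⟨⟨k, rfl⟩, by unfold beta; omega⟩
    rw [himage, lam.beta_strictAnti.injective.injOn.encard_image, ← Finset.coe_Iio,
      Set.encard_coe_eq_coe_finsetCard, Nat.card_Iio]

theorem exists_betaSet_eq_range {b : ℕ → ℤ} (hb : StrictAnti b) {N : ℕ}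
    (hN : ∀ j, N ≤ j → b j = -(j + 1)) :
    ∃ lam : PartitionSeq, lam.betaSet = Set.range b := by
  have hnonneg : ∀ j, 0 ≤ b j + j + 1 := fun j => by
    have : b (max j N) + (max j N : ℕ) ≤ b j + j := hb.antitone_add_self (le_max_left j N)
    rw [hN _ (le_max_right j N)] at this
    omega
  refine ⟨⟨fun j => (b j + j + 1).toNat, fun i j hij => ?_, N, ?_⟩, ?_⟩
  · have : b j + j ≤ b i + i := hb.antitone_add_self hij
    show (b j + j + 1).toNat ≤ (b i + i + 1).toNat
    omega
  · simp [hN N le_rfl]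
  · unfold betaSet
    congr 1
    funext j
    have := hnonneg j
    show ((b j + j + 1).toNat : ℤ) - (j + 1) = b j
    omega

theorem exists_betaSet_eq {S : Set ℤ} {N : ℕ} (h : ChargeZeroAt S N) :
    ∃ lam : PartitionSeq, lam.betaSet = S := by
  obtain ⟨b, hb, rfl⟩ := exists_strictAnti_range_eq h.bddAbove ((Set.Iio_infinite _).mono h.1)
  have hIio := hb.setOf_le_eq_Iio_of_chargeZeroAt h
  have hbN : b N < -N := by simpa using (hIio.symm ▸ lt_irrefl N : N ∉ {k | -(N : ℤ) ≤ b k})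
  have hbN' : b N = -(N + 1) := by
    obtain ⟨k, hk⟩ := h.1 (show -((N : ℤ) + 1) < -N by omega)
    have hNk : N ≤ k := not_lt.1 fun hkN => by
      have : k ∈ {k | -(N : ℤ) ≤ b k} := hIio ▸ hkN
      simp only [Set.mem_ofPred_eq] at this
      omega
    have := hb.antitone hNk
    omega
  refine exists_betaSet_eq_range hb (N := N) fun j hj => ?_
  obtain ⟨k, rfl⟩ := Nat.exists_eq_add_of_le hj
  rw [hb.apply_add_of_Iio_subset_range h.1 hbN, hbN']
  push_cast
  ring

theorem setOf_lt_parts_eq_Iio (j : ℕ) : {i | j < lam.parts i} = Set.Iio (lam.conjParts j) := by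
  have hex : ∃ i, lam.parts i ≤ j :=
    lam.eventually_zero.imp fun N (hN : lam.parts N = 0) => hN ▸ Nat.zero_le j
  have hset : {i | j < lam.parts i} = Set.Iio (Nat.find hex) := by
    ext i
    simp only [Set.mem_ofPred_eq, Set.mem_Iio]
    refine ⟨fun hi => ?_, fun hi => not_le.1 (Nat.find_min hex hi)⟩
    by_contra hni
    exact (Nat.find_spec hex).not_gt (hi.trans_le (lam.antitone (not_lt.1 hni)))
  rw [conjParts, hset, Set.ncard_Iio_nat]

theorem lt_conjParts_iff {i j : ℕ} : i < lam.conjParts j ↔ j < lam.parts i := by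
  rw [← Set.mem_Iio, ← setOf_lt_parts_eq_Iio, Set.mem_ofPred_eq]

theorem hook_eq {i j : ℕ} (hj : j < lam.parts i) :
    (lam.hook i j : ℤ) = lam.beta i - ((j : ℤ) - lam.conjParts j) := by
  have hset : {i' | i < i' ∧ j < lam.parts i'} = Set.Ioo i (lam.conjParts j) := by
    ext i'
    simp [lt_conjParts_iff]
  have hi : i < lam.conjParts j := lam.lt_conjParts_iff.2 hj
  rw [hook, hset, ← Finset.coe_Ioo, Set.ncard_coe_finset, Nat.card_Ioo, beta]
  omega

theorem sub_conjParts_lt_beta {i j : ℕ} (h : i < lam.conjParts j) :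
    (j : ℤ) - lam.conjParts j < lam.beta i := by
  have := lam.lt_conjParts_iff.1 h
  unfold beta
  omega

theorem beta_lt_sub_conjParts {i j : ℕ} (h : lam.conjParts j ≤ i) :
    lam.beta i < (j : ℤ) - lam.conjParts j := by
  have := mt lam.lt_conjParts_iff.2 h.not_gt
  unfold beta
  omega

theorem sub_conjParts_notMem_betaSet (j : ℕ) : (j : ℤ) - lam.conjParts j ∉ lam.betaSet := by
  rintro ⟨i, hi⟩
  rcases lt_or_ge i (lam.conjParts j) with h | h
  · exact (lam.sub_conjParts_lt_beta h).ne' hi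
  · exact (lam.beta_lt_sub_conjParts h).ne hi

theorem exists_sub_conjParts_eq {y : ℤ} (hy : y ∉ lam.betaSet) :
    ∃ j : ℕ, (j : ℤ) - lam.conjParts j = y := by
  -- `m` beta-numbers lie above the gap `y`, and column `y + m` turns out to have length `m`.
  obtain ⟨m, hm⟩ := lam.beta_strictAnti.exists_setOf_le_eq_Iio y
  have hne : ∀ k, lam.beta k ≠ y := fun k hk => hy ⟨k, hk⟩
  have hlt : ∀ k, k < m ↔ y < lam.beta k := fun k => by
    rw [← Set.mem_Iio, ← hm, Set.mem_ofPred_eq, le_iff_lt_or_eq, or_iff_left (hne k).symm]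
  have hparts : ∀ k, (lam.parts k : ℤ) = lam.beta k + k + 1 := fun k => by unfold beta; ring
  have hym : 0 ≤ y + m := by
    have := (hlt m).not.1 (lt_irrefl m)
    have := hne m
    have := hparts m
    omega
  refine ⟨(y + m).toNat, ?_⟩
  suffices lam.conjParts (y + m).toNat = m by omega
  rw [← Set.Iio_inj, ← setOf_lt_parts_eq_Iio]
  ext k
  simp only [Set.mem_ofPred_eq, Set.mem_Iio]
  rw [hlt, ← Int.ofNat_lt, Int.toNat_of_nonneg hym, hparts]
  have hanti := lam.beta_strictAnti.antitone_add_self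
  constructor
  · intro hk
    by_contra hyk
    have hmk : lam.beta m + m ≥ lam.beta k + k := hanti (not_lt.1 ((hlt k).not.2 hyk))
    have := (hlt m).not.1 (lt_irrefl m)
    have := hne m
    omega
  · intro hyk
    have hkm := (hlt k).2 hyk
    have hm1 := (hlt (m - 1)).1 (by omega)
    have : lam.beta k + k ≥ lam.beta (m - 1) + (m - 1 : ℕ) := hanti (by omega)
    omega

theorem isCore_iff_sub_mem_betaSet {a : ℕ} (ha : 0 < a) :
    lam.IsCore a ↔ ∀ x ∈ lam.betaSet, x - a ∈ lam.betaSet := by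
  rw [betaSet_eq_range_beta]
  constructor
  · rintro hcore _ ⟨i, rfl⟩
    by_contra hy
    obtain ⟨j, hj⟩ := lam.exists_sub_conjParts_eq hy
    have hi : i < lam.conjParts j := by
      by_contra hi
      have := lam.beta_lt_sub_conjParts (not_lt.1 hi)
      omega
    have hji := lam.lt_conjParts_iff.1 hi
    refine hcore i j hji ?_
    have := lam.hook_eq hji
    omega
  · intro hclosed i j hji hhook
    have := lam.hook_eq hji
    subst hhook
    have hmem := hclosed _ ⟨i, rfl⟩
    rw [show lam.beta i - (lam.hook i j : ℤ) = j - lam.conjParts j by omega] at hmem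
    exact lam.sub_conjParts_notMem_betaSet j hmem

end PartitionSeq

section Abacus

variable {a : ℕ}

def abacusPos (a : ℕ) (i : Fin a) (m : ℤ) : ℤ := -(a : ℤ) * m - i - 1

theorem abacusPos_sub (i : Fin a) (m : ℤ) : abacusPos a i m - a = abacusPos a i (m + 1) := by
  unfold abacusPos
  ring

theorem abacusPos_inj {i i' : Fin a} {m m' : ℤ} :
    abacusPos a i m = abacusPos a i' m' ↔ i = i' ∧ m = m' := by
  refine ⟨fun h => ?_, fun h => h.1 ▸ h.2 ▸ rfl⟩
  have ha : (0 : ℤ) < a := by have := i.pos; omega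
  have hi := (Int.ediv_emod_unique (a := -(abacusPos a i m) - 1) (r := i) (q := m) ha).2
    ⟨by unfold abacusPos; ring, by omega, by omega⟩
  have hi' := (Int.ediv_emod_unique (a := -(abacusPos a i m) - 1) (r := i') (q := m') ha).2
    ⟨by rw [h]; unfold abacusPos; ring, by omega, by omega⟩
  exact ⟨Fin.ext (by omega), by omega⟩

theorem exists_abacusPos_eq (ha : 0 < a) (x : ℤ) : ∃ i m, abacusPos a i m = x := by
  have ha' : (0 : ℤ) < a := by omega
  have hlt := Int.emod_lt_of_pos (-x - 1) ha'
  have hnonneg := Int.emod_nonneg (-x - 1) ha'.ne'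
  refine ⟨⟨((-x - 1) % a).toNat, by omega⟩, (-x - 1) / a, ?_⟩
  have := Int.mul_ediv_add_emod (-x - 1) a
  unfold abacusPos
  simp only [Int.toNat_of_nonneg hnonneg]
  linarith

theorem abacusPos_lt_neg_mul_iff {i : Fin a} {m M : ℤ} :
    abacusPos a i m < -(a * M) ↔ M ≤ m := by
  have hi : (i : ℤ) < a := by omega
  unfold abacusPos
  constructor <;> intro h
  · by_contra hm
    nlinarith
  · nlinarith

theorem mem_Bset_iff {c : Fin a → ℤ} {x : ℤ} :
    x ∈ Bset a c ↔ ∃ i m, c i ≤ m ∧ abacusPos a i m = x := by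
  constructor
  · rintro ⟨i, n, rfl⟩
    exact ⟨i, c i + n, by omega, rfl⟩
  · rintro ⟨i, m, hm, rfl⟩
    refine ⟨i, (m - c i).toNat, ?_⟩
    rw [Int.toNat_of_nonneg (by omega)]
    unfold abacusPos
    ring

theorem abacusPos_mem_Bset_iff {c : Fin a → ℤ} {i : Fin a} {m : ℤ} :
    abacusPos a i m ∈ Bset a c ↔ c i ≤ m := by
  rw [mem_Bset_iff]
  constructor
  · rintro ⟨i', m', hm', h⟩
    obtain ⟨rfl, rfl⟩ := abacusPos_inj.1 h
    exact hm'
  · exact fun hm => ⟨i, m, hm, rfl⟩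

theorem Bset_injective : Function.Injective (Bset a) := fun c c' h => by
  funext i
  have key : ∀ c c' : Fin a → ℤ, Bset a c = Bset a c' → c' i ≤ c i := fun c c' h => by
    rw [← abacusPos_mem_Bset_iff (a := a), ← h, abacusPos_mem_Bset_iff]
  exact le_antisymm (key c' c h.symm) (key c c' h)

theorem sub_mem_Bset {c : Fin a → ℤ} {x : ℤ} (hx : x ∈ Bset a c) : x - a ∈ Bset a c := by
  obtain ⟨i, m, hm, rfl⟩ := mem_Bset_iff.1 hx
  rw [abacusPos_sub, abacusPos_mem_Bset_iff]
  omega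

theorem Bset_inter_Ici_eq_image (c : Fin a → ℤ) (M : ℤ) :
    Bset a c ∩ Set.Ici (-(a * M)) = (fun p : Σ _ : Fin a, ℤ => abacusPos a p.1 p.2) ''
      ↑(Finset.univ.sigma fun i => Finset.Ico (c i) M) := by
  ext x
  simp only [Set.mem_inter_iff, mem_Bset_iff, Set.mem_Ici, Set.mem_image, Finset.coe_sigma,
    Set.mem_sigma_iff, Finset.coe_univ, Set.mem_univ, Finset.coe_Ico, Set.mem_Ico, true_and,
    Sigma.exists]
  constructor
  · rintro ⟨⟨i, m, hm, rfl⟩, hx⟩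
    exact ⟨i, m, ⟨hm, not_le.1 (mt abacusPos_lt_neg_mul_iff.2 hx.not_gt)⟩, rfl⟩
  · rintro ⟨i, m, ⟨hm, hmM⟩, rfl⟩
    exact ⟨⟨i, m, hm, rfl⟩, not_lt.1 (mt abacusPos_lt_neg_mul_iff.1 hmM.not_ge)⟩

theorem chargeZeroAt_Bset_iff (ha : 0 < a) {c : Fin a → ℤ} {M : ℕ} (hM : ∀ i, c i ≤ M) :
    ChargeZeroAt (Bset a c) (a * M) ↔ ∑ i, c i = 0 := by
  have hlow : Set.Iio (-((a * M : ℕ) : ℤ)) ⊆ Bset a c := fun x hx => by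
    obtain ⟨i, m, rfl⟩ := exists_abacusPos_eq ha x
    push_cast at hx
    exact abacusPos_mem_Bset_iff.2 ((hM i).trans (abacusPos_lt_neg_mul_iff.1 hx))
  have hcard : (Bset a c ∩ Set.Ici (-((a * M : ℕ) : ℤ))).encard = ∑ i, (M - c i).toNat := by
    push_cast
    rw [Bset_inter_Ici_eq_image, Set.InjOn.encard_image, Set.encard_coe_eq_coe_finsetCard,
      Finset.card_sigma]
    · simp [Int.card_Ico]
    · rintro ⟨i, m⟩ - ⟨i', m'⟩ - h
      obtain ⟨rfl, rfl⟩ := abacusPos_inj.1 h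
      rfl
  rw [ChargeZeroAt, and_iff_right hlow, hcard, Nat.cast_inj, ← Nat.cast_inj (R := ℤ)]
  push_cast
  rw [Finset.sum_congr rfl fun i _ => Int.toNat_of_nonneg (sub_nonneg.2 (hM i)),
    Finset.sum_sub_distrib]
  simp

theorem exists_Bset_eq (ha : 0 < a) {S : Set ℤ} (hbdd : BddAbove S) {t : ℤ}
    (hlow : Set.Iio t ⊆ S) (hS : ∀ x ∈ S, x - a ∈ S) : ∃ c, Bset a c = S := by
  obtain ⟨K, hK⟩ := hbdd
  have ha1 : (1 : ℤ) ≤ a := by omega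
  have hbelow : ∀ i, ∃ b : ℤ, ∀ m, abacusPos a i m ∈ S → b ≤ m := fun i =>
    ⟨-(|K| + 1), fun m hm => abacusPos_lt_neg_mul_iff.1 ((hK hm).trans_lt (by
      linarith [le_abs_self K,
        le_mul_of_one_le_left (by positivity : (0 : ℤ) ≤ |K| + 1) ha1]))⟩
  have hne : ∀ i, ∃ m, abacusPos a i m ∈ S := fun i =>
    ⟨|t|, hlow ((abacusPos_lt_neg_mul_iff.2 le_rfl).trans_le (by
      linarith [neg_abs_le t, le_mul_of_one_le_left (abs_nonneg t) ha1]))⟩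
  choose c hc hcmin using fun i => Int.exists_least_of_bdd (hbelow i) (hne i)
  refine ⟨c, Set.ext fun x => ⟨fun hx => ?_, fun hx => ?_⟩⟩
  · obtain ⟨i, m, hm, rfl⟩ := mem_Bset_iff.1 hx
    clear hx
    induction m, hm using Int.leInduction with
    | base => exact hc i
    | succ m _ ih => exact abacusPos_sub i m ▸ hS _ ih
  · obtain ⟨i, m, rfl⟩ := exists_abacusPos_eq ha x
    exact abacusPos_mem_Bset_iff.2 (hcmin i m hx)

end Abacus

section Cores

variable {a : ℕ}

theorem exists_nat_upper_bound (c : Fin a → ℤ) (N : ℕ) :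
    ∃ M : ℕ, N ≤ M ∧ ∀ i, c i ≤ M := by
  obtain ⟨M, hM⟩ := Finite.exists_le fun i => (c i).toNat
  exact ⟨max M N, le_max_right _ _, fun i => by have := hM i; omega⟩

theorem existsUnique_betaSet_eq_Bset (ha : 0 < a) {c : Fin a → ℤ} (hc : ∑ i, c i = 0) :
    ∃! lam : PartitionSeq, lam.betaSet = Bset a c := by
  obtain ⟨M, -, hM⟩ := exists_nat_upper_bound c 0
  obtain ⟨lam, hlam⟩ := PartitionSeq.exists_betaSet_eq ((chargeZeroAt_Bset_iff ha hM).2 hc)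
  exact ⟨lam, hlam, fun mu hmu => PartitionSeq.betaSet_injective (hmu.trans hlam.symm)⟩

theorem PartitionSeq.isCore_of_betaSet_eq_Bset (ha : 0 < a) {lam : PartitionSeq}
    {c : Fin a → ℤ} (h : lam.betaSet = Bset a c) : lam.IsCore a :=
  (lam.isCore_iff_sub_mem_betaSet ha).2 (h ▸ fun _ => sub_mem_Bset)

theorem PartitionSeq.exists_Bset_eq_betaSet (ha : 0 < a) {lam : PartitionSeq}
    (hcore : lam.IsCore a) : ∃ c : Fin a → ℤ, ∑ i, c i = 0 ∧ Bset a c = lam.betaSet := by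
  obtain ⟨N, hN⟩ := lam.eventually_zero
  have hbdd : BddAbove lam.betaSet :=
    ⟨lam.beta 0, by rintro _ ⟨k, rfl⟩; exact lam.beta_strictAnti.antitone (Nat.zero_le k)⟩
  obtain ⟨c, hc⟩ := exists_Bset_eq ha hbdd (lam.chargeZeroAt_betaSet hN).1
    ((lam.isCore_iff_sub_mem_betaSet ha).1 hcore)
  obtain ⟨M, hNM, hM⟩ := exists_nat_upper_bound c N
  have hcharge := lam.chargeZeroAt_betaSet (N := a * M)
    (lam.parts_eq_zero_of_le hN (hNM.trans (Nat.le_mul_of_pos_left M ha)))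
  rw [← hc] at hcharge
  exact ⟨c, (chargeZeroAt_Bset_iff ha hM).1 hcharge, hc⟩

end Cores

/-- for every `c ∈ ℤ^a` summing to zero there is a unique partition with
beta-set `B_a(c)`; it is an `a`-core, and `c ↦ core_a(c)` is a bijection onto `a`-cores. -/
theorem stmt0 (a : ℕ) (ha : 1 ≤ a) :
    (∀ c : Fin a → ℤ, (∑ i, c i) = 0 →
      ∃! lam : PartitionSeq, lam.betaSet = Bset a c) ∧
    ∃ core : {c : Fin a → ℤ // (∑ i, c i) = 0} → {lam : PartitionSeq // lam.IsCore a},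
      (∀ c, (core c).val.betaSet = Bset a c.val) ∧ Function.Bijective core := by
  have hunique := fun (c : Fin a → ℤ) (hc : ∑ i, c i = 0) =>
    existsUnique_betaSet_eq_Bset ha hc
  choose core hcore using fun c : {c : Fin a → ℤ // ∑ i, c i = 0} => (hunique c.1 c.2).exists
  refine ⟨hunique, fun c => ⟨core c, PartitionSeq.isCore_of_betaSet_eq_Bset ha (hcore c)⟩,
    hcore, fun c c' h => Subtype.ext (Bset_injective ?_), fun ⟨lam, hlam⟩ => ?_⟩
  · rw [← hcore c, ← hcore c', show core c = core c' from congrArg Subtype.val h]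
  · obtain ⟨c, hc, hBc⟩ := PartitionSeq.exists_Bset_eq_betaSet ha hlam
    exact ⟨⟨c, hc⟩, Subtype.ext (PartitionSeq.betaSet_injective ((hcore _).trans hBc))⟩
end

section
/- Let a, b ≥ 1 be coprime integers. Let k be an integer chosen as follows: if a is odd, k ≡ −(b+1)(a+1)/2 (mod a); if a is even (so b is odd), k ≡ −(b+1)/2 (mod a). For c = (c_0, …, c_{a−1}) ∈ ℤ^a with Σ c_i = 0 set x_i = c_i + i/a − (a−1)/(2a) for 0 ≤ i ≤ a−1, and define z_i = x_{(ib+k) mod a} − x_{((i+1)b+k) mod a} + b/a for 0 ≤ i ≤ a−1 (all indices reduced modulo a into {0, …, a−1}). Then c ↦ (z_0, …, z_{a−1}) is a bijection from { c ∈ ℤ^a : Σ c_i = 0 and c_{(i+b) mod a} − c_i ≤ ⌊(b+i)/a⌋ for all 0 ≤ i ≤ a−1 } onto { z ∈ ℕ^a : Σ_{i=0}^{a−1} z_i = b and Σ_{i=0}^{a−1} i·z_i ≡ 0 (mod a) }. -/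
/-- Reduction of an integer modulo `a` into `Fin a`. -/
def idxZ (a : ℕ) (ha : 0 < a) (t : ℤ) : Fin a :=
  ⟨(t % (a : ℤ)).toNat, by
    have hne : (a : ℤ) ≠ 0 := by exact_mod_cast ha.ne'
    have h0 : (0 : ℤ) ≤ t % (a : ℤ) := Int.emod_nonneg t hne
    have h1 : t % (a : ℤ) < (a : ℤ) := Int.emod_lt_of_pos t (by exact_mod_cast ha)
    omega⟩

/-- The shifted coordinates `x_i = c_i + i/a − (a−1)/(2a)`. -/
def xcoord (a : ℕ) (c : Fin a → ℤ) (i : Fin a) : ℚ :=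
  (c i : ℚ) + (i.val : ℚ) / a - ((a : ℚ) - 1) / (2 * a)

open Finset

section CyclicDifference

variable {a : ℕ} [NeZero a]

def cycDiff {G : Type*} [Sub G] (f : Fin a → G) (i : Fin a) : G := f i - f (i + 1)

theorem sum_cycDiff {G : Type*} [AddCommGroup G] (f : Fin a → G) : ∑ i, cycDiff f i = 0 := by
  simp only [cycDiff, sum_sub_distrib]
  exact sub_eq_zero.mpr (Equiv.sum_comp (Equiv.addRight 1) f).symm

theorem sum_val_mul_cycDiff {R : Type*} [CommRing R] (f : Fin a → R) :
    ∑ i, (i.val : R) * cycDiff f i = ∑ i, f i - a * f 0 := by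
  obtain ⟨n, rfl⟩ := Nat.exists_eq_succ_of_ne_zero (NeZero.ne a)
  simp only [cycDiff, mul_sub, sum_sub_distrib]
  rw [Fin.sum_univ_succ (fun i => (i.val : R) * f i),
    Fin.sum_univ_castSucc (fun i => (i.val : R) * f (i + 1)), Fin.sum_univ_succ f]
  simp only [Fin.coeSucc_eq_succ, Fin.last_add_one, Fin.val_succ, Fin.val_castSucc, Fin.val_last,
    Fin.val_zero]
  push_cast
  simp only [add_mul, one_mul, sum_add_distrib]
  ring

theorem eq_of_cycDiff_eq_zero {G : Type*} [AddGroup G] {f : Fin a → G} (hf : cycDiff f = 0)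
    (i : Fin a) : f i = f 0 := by
  obtain ⟨n, rfl⟩ := Nat.exists_eq_succ_of_ne_zero (NeZero.ne a)
  induction i using Fin.induction with
  | zero => rfl
  | succ i ih =>
    have h := congrFun hf i.castSucc
    rw [cycDiff, Fin.coeSucc_eq_succ, Pi.zero_apply, sub_eq_zero] at h
    rw [← h, ih]

theorem exists_cycDiff_eq {G : Type*} [AddCommGroup G] {d : Fin a → G} (hd : ∑ i, d i = 0) :
    ∃ f, cycDiff f = d := by
  obtain ⟨n, rfl⟩ := Nat.exists_eq_succ_of_ne_zero (NeZero.ne a)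
  refine ⟨-Fin.partialSum (Fin.init d), ?_⟩
  have hinit : ∀ j : Fin n, cycDiff (-Fin.partialSum (Fin.init d)) j.castSucc = d j.castSucc := by
    intro j
    simp [cycDiff, Fin.coeSucc_eq_succ, Fin.partialSum_succ, Fin.init]
  funext i
  induction i using Fin.lastCases with
  | cast j => exact hinit j
  | last =>
    have h := sum_cycDiff (-Fin.partialSum (Fin.init d))
    rw [Fin.sum_univ_castSucc] at h hd
    simp only [hinit] at h
    exact add_left_cancel (h.trans hd.symm)

theorem cycDiff_bijOn :
    Set.BijOn cycDiff {f : Fin a → ℤ | ∑ i, f i = 0}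
      {d | ∑ i, d i = 0 ∧ (a : ℤ) ∣ ∑ i, (i.val : ℤ) * d i} := by
  refine ⟨fun f (hf : ∑ i, f i = 0) => ⟨sum_cycDiff f, ?_⟩,
    fun f (hf : ∑ i, f i = 0) g (hg : ∑ i, g i = 0) hfg => ?_, fun d ⟨hd, hdvd⟩ => ?_⟩
  · exact ⟨-f 0, by rw [sum_val_mul_cycDiff, hf]; ring⟩
  · have hconst : cycDiff (f - g) = 0 := by
      funext i
      simp only [cycDiff, Pi.sub_apply, Pi.zero_apply]
      exact (sub_sub_sub_comm _ _ _ _).trans (sub_eq_zero.mpr (congrFun hfg i))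
    have hzero : f 0 - g 0 = 0 := by
      have hsum : ∑ i, (f - g) i = 0 := by
        simp only [Pi.sub_apply, sum_sub_distrib, hf, hg, sub_zero]
      simpa [eq_of_cycDiff_eq_zero hconst, ← mul_sub, NeZero.ne a] using hsum
    funext i
    exact sub_eq_zero.mp ((eq_of_cycDiff_eq_zero hconst i).trans hzero)
  · obtain ⟨f, rfl⟩ := exists_cycDiff_eq hd
    obtain ⟨m, hm⟩ : (a : ℤ) ∣ ∑ i, f i := by
      rw [← sub_add_cancel (∑ i, f i) (a * f 0), ← sum_val_mul_cycDiff]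
      exact dvd_add hdvd (dvd_mul_right _ _)
    refine ⟨f - fun _ => m, ?_, ?_⟩
    · simp [sum_sub_distrib, hm]
    · funext i
      simp only [cycDiff, Pi.sub_apply, sub_sub_sub_cancel_right]

end CyclicDifference

section Orbit

variable {a b : ℕ} (ha : 0 < a) (k : ℤ)

theorem idxZ_val (t : ℤ) : ((idxZ a ha t).val : ℤ) = t % a :=
  Int.toNat_of_nonneg (Int.emod_nonneg t (by exact_mod_cast ha.ne'))

theorem idxZ_eq_idxZ_iff {s t : ℤ} : idxZ a ha s = idxZ a ha t ↔ s ≡ t [ZMOD a] := by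
  rw [Fin.ext_iff, ← Nat.cast_inj (R := ℤ), idxZ_val, idxZ_val, Int.ModEq]

theorem idxZ_add_natCast (t : ℤ) (b : ℕ) :
    idxZ a ha (t + b) = ⟨((idxZ a ha t).val + b) % a, Nat.mod_lt _ ha⟩ := by
  rw [Fin.ext_iff, ← Nat.cast_inj (R := ℤ), idxZ_val]
  push_cast
  rw [idxZ_val, Int.emod_add_emod]

variable (a b) in
def orbit (i : Fin a) : Fin a := idxZ a ha (i.val * b + k)

theorem orbit_zero [NeZero a] : orbit a b ha k 0 = idxZ a ha k := by
  simp [orbit]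

theorem orbit_add_one [NeZero a] (i : Fin a) :
    orbit a b ha k (i + 1) = ⟨((orbit a b ha k i).val + b) % a, Nat.mod_lt _ ha⟩ := by
  rw [orbit, orbit, ← idxZ_add_natCast, idxZ_eq_idxZ_iff]
  have hval : ((i + 1 : Fin a).val : ℤ) ≡ i.val + 1 [ZMOD a] := by
    rw [Fin.val_add, Fin.val_one']
    exact_mod_cast (Nat.mod_modEq _ _).trans ((Nat.mod_modEq 1 a).add_left _)
  calc ((i + 1 : Fin a).val : ℤ) * b + k ≡ (i.val + 1) * b + k [ZMOD a] :=
        (hval.mul_right _).add_right _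
    _ = i.val * b + k + b := by ring

theorem orbit_bijective (hab : a.Coprime b) : Function.Bijective (orbit a b ha k) := by
  refine Function.Injective.bijective_of_finite fun s t hst => ?_
  rw [orbit, orbit, idxZ_eq_idxZ_iff] at hst
  have h := (hst.add_right_cancel' k).cancel_right_div_gcd (by exact_mod_cast ha)
  rw [Int.gcd_natCast_natCast, hab, Nat.cast_one, Int.ediv_one] at h
  have h' := Int.natCast_modEq_iff.mp h
  rw [Nat.ModEq, Nat.mod_eq_of_lt s.isLt, Nat.mod_eq_of_lt t.isLt] at h'
  exact Fin.ext h'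

variable (a b) in
def carry (j : Fin a) : ℕ := (b + j.val) / a

theorem mul_carry_orbit [NeZero a] (i : Fin a) :
    (a : ℤ) * carry a b (orbit a b ha k i) =
      b + cycDiff (fun j => ((orbit a b ha k j).val : ℤ)) i := by
  have h : a * carry a b (orbit a b ha k i) + ((orbit a b ha k i).val + b) % a =
      b + (orbit a b ha k i).val := by
    rw [carry, add_comm _ b]
    exact Nat.div_add_mod _ _
  rw [cycDiff, orbit_add_one]
  push_cast at h ⊢
  linarith

theorem sum_carry_orbit [NeZero a] : ∑ i, (carry a b (orbit a b ha k i) : ℤ) = b := by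
  refine mul_left_cancel₀ (Nat.cast_ne_zero.mpr (NeZero.ne a)) ?_
  rw [mul_sum]
  simp only [mul_carry_orbit, sum_add_distrib, sum_cycDiff, sum_const, card_univ,
    Fintype.card_fin, nsmul_eq_mul, add_zero]

theorem two_mul_sum_val_mul_carry_orbit (hab : a.Coprime b) :
    2 * ∑ i : Fin a, (i.val : ℤ) * carry a b (orbit a b ha k i) =
      (b + 1) * (a - 1) - 2 * (idxZ a ha k).val := by
  have : NeZero a := ⟨ha.ne'⟩
  have hgauss : 2 * ∑ i : Fin a, (i.val : ℤ) = a * (a - 1) := by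
    have h := congrArg (Nat.cast : ℕ → ℤ) (sum_range_id_mul_two a)
    push_cast [Nat.cast_sub NeZero.one_le] at h
    rw [Fin.sum_univ_eq_sum_range (fun i => (i : ℤ)) a]
    linarith
  have hperm : ∑ i, ((orbit a b ha k i).val : ℤ) = ∑ i : Fin a, (i.val : ℤ) :=
    Equiv.sum_comp (Equiv.ofBijective _ (orbit_bijective ha k hab)) (fun j => (j.val : ℤ))
  refine mul_left_cancel₀ (Nat.cast_ne_zero.mpr (NeZero.ne a)) ?_
  calc (a : ℤ) * (2 * ∑ i : Fin a, (i.val : ℤ) * carry a b (orbit a b ha k i))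
      = 2 * ∑ i : Fin a,
          (i.val : ℤ) * (b + cycDiff (fun j => ((orbit a b ha k j).val : ℤ)) i) := by
        rw [mul_left_comm, mul_sum]
        simp only [← mul_carry_orbit, mul_left_comm]
    _ = _ := by
        rw [← orbit_zero ha k (b := b)]
        simp only [mul_add, sum_add_distrib, sum_val_mul_cycDiff, hperm, ← sum_mul]
        linear_combination (b + 1 : ℤ) * hgauss

theorem natCast_dvd_sum_val_mul_carry_orbit (hab : a.Coprime b)
    (hk : (2 * a : ℤ) ∣ (b + 1) * (a - 1) - 2 * k) :
    (a : ℤ) ∣ ∑ i : Fin a, (i.val : ℤ) * carry a b (orbit a b ha k i) := by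
  refine (mul_dvd_mul_iff_left (two_ne_zero' ℤ)).mp ?_
  rw [two_mul_sum_val_mul_carry_orbit ha k hab, idxZ_val, Int.emod_def]
  convert dvd_add hk (dvd_mul_right (2 * a : ℤ) (k / a)) using 1
  ring

end Orbit

theorem two_mul_dvd_of_shift_condition {a b : ℕ} (hab : a.Coprime b) {k : ℤ}
    (hk_odd : a % 2 = 1 → k ≡ -(((b + 1) * ((a + 1) / 2) : ℕ) : ℤ) [ZMOD (a : ℤ)])
    (hk_even : a % 2 = 0 → k ≡ -((((b + 1) / 2) : ℕ) : ℤ) [ZMOD (a : ℤ)]) :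
    (2 * a : ℤ) ∣ (b + 1) * (a - 1) - 2 * k := by
  rcases Nat.mod_two_eq_zero_or_one a with ha2 | ha2
  · obtain ⟨r, hr⟩ := (hk_even ha2).dvd
    have hb2 : b % 2 = 1 :=
      Nat.odd_iff.mp (Nat.coprime_two_left.mp (hab.coprime_dvd_left (Nat.dvd_of_mod_eq_zero ha2)))
    have hhalf : (((b + 1) / 2 : ℕ) : ℤ) * 2 = b + 1 := by
      exact_mod_cast (by omega : (b + 1) / 2 * 2 = b + 1)
    exact ⟨((b + 1) / 2 : ℕ) + r, by linear_combination 2 * hr - (a - 1 : ℤ) * hhalf⟩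
  · obtain ⟨r, hr⟩ := (hk_odd ha2).dvd
    have hhalf : (((a + 1) / 2 : ℕ) : ℤ) * 2 = a + 1 := by
      exact_mod_cast (by omega : (a + 1) / 2 * 2 = a + 1)
    rw [Nat.cast_mul, Nat.cast_succ] at hr
    exact ⟨b + 1 + r, by linear_combination 2 * hr + (b + 1 : ℤ) * hhalf⟩

section ZCoordinates

variable {a b : ℕ} (ha : 0 < a) (k : ℤ) [NeZero a]

variable (a b) in
def zcoord (c : Fin a → ℤ) : Fin a → ℤ :=
  cycDiff (c ∘ orbit a b ha k) + fun i => (carry a b (orbit a b ha k i) : ℤ)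

theorem xcoord_sub_xcoord_add_div (c : Fin a → ℤ) (i : Fin a) :
    xcoord a c (idxZ a ha ((i.val : ℤ) * b + k)) -
        xcoord a c (idxZ a ha (((i.val : ℤ) + 1) * b + k)) + (b : ℚ) / a =
      zcoord a b ha k c i := by
  have hnext : idxZ a ha (((i.val : ℤ) + 1) * b + k) = orbit a b ha k (i + 1) := by
    rw [orbit_add_one, orbit, ← idxZ_add_natCast]
    congr 1
    ring
  have hcarry : (carry a b (orbit a b ha k i) : ℚ) =
      (b + (orbit a b ha k i).val - (orbit a b ha k (i + 1)).val) / a := by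
    have h := congrArg (Int.cast : ℤ → ℚ) (mul_carry_orbit ha k (b := b) i)
    push_cast [cycDiff] at h
    rw [eq_div_iff (Nat.cast_ne_zero.mpr (NeZero.ne a)), mul_comm, h]
    ring
  rw [hnext, show idxZ a ha ((i.val : ℤ) * b + k) = orbit a b ha k i from rfl]
  simp only [zcoord, xcoord, Pi.add_apply, cycDiff, Function.comp_apply]
  push_cast [hcarry]
  ring

theorem zcoord_nonneg_iff (hab : a.Coprime b) (c : Fin a → ℤ) :
    0 ≤ zcoord a b ha k c ↔ ∀ j : Fin a,
      c ⟨(j.val + b) % a, Nat.mod_lt _ ha⟩ - c j ≤ (((b + j.val) / a : ℕ) : ℤ) := by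
  rw [(orbit_bijective ha k hab).surjective.forall, Pi.le_def]
  refine forall_congr' fun i => ?_
  simp only [zcoord, cycDiff, Pi.add_apply, Pi.zero_apply, Function.comp_apply, orbit_add_one,
    carry]
  constructor <;> intro h <;> linarith

theorem zcoord_bijOn (hab : a.Coprime b) (hk : (2 * a : ℤ) ∣ (b + 1) * (a - 1) - 2 * k) :
    Set.BijOn (zcoord a b ha k)
      {c : Fin a → ℤ | (∑ i, c i) = 0 ∧ ∀ i : Fin a,
        c ⟨(i.val + b) % a, Nat.mod_lt _ ha⟩ - c i ≤ (((b + i.val) / a : ℕ) : ℤ)}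
      {n : Fin a → ℤ | 0 ≤ n ∧ ∑ i, n i = b ∧ (a : ℤ) ∣ ∑ i, (i.val : ℤ) * n i} := by
  set σ := Equiv.ofBijective _ (orbit_bijective ha k hab)
  set g : Fin a → ℤ := fun i => (carry a b (σ i) : ℤ)
  have hg : ∑ i, g i = b := sum_carry_orbit ha k
  have hgw : (a : ℤ) ∣ ∑ i : Fin a, (i.val : ℤ) * g i :=
    natCast_dvd_sum_val_mul_carry_orbit ha k hab hk
  have hsum (c : Fin a → ℤ) : ∑ i, (c ∘ σ) i = ∑ i, c i := σ.sum_comp c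
  refine ⟨?_, ?_, ?_⟩
  · rintro c ⟨hc0, hc⟩
    obtain ⟨-, hdvd⟩ := cycDiff_bijOn.mapsTo ((hsum c).trans hc0)
    refine ⟨(zcoord_nonneg_iff ha k hab c).mpr hc, ?_, ?_⟩
    · simp only [zcoord, Pi.add_apply, sum_add_distrib, sum_cycDiff, zero_add]
      exact hg
    · simp only [zcoord, Pi.add_apply, mul_add, sum_add_distrib]
      exact dvd_add hdvd hgw
  · rintro c ⟨hc0, -⟩ c' ⟨hc0', -⟩ hcc'
    have hdiff : cycDiff (c ∘ σ) = cycDiff (c' ∘ σ) := add_right_cancel hcc'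
    exact σ.surjective.injective_comp_right
      (cycDiff_bijOn.injOn ((hsum c).trans hc0) ((hsum c').trans hc0') hdiff)
  · rintro n ⟨hn0, hn, hnw⟩
    obtain ⟨f, hf0, hf⟩ := cycDiff_bijOn.surjOn (show n - g ∈ _ from by
      refine ⟨by simp [sum_sub_distrib, hn, hg], ?_⟩
      simp only [Pi.sub_apply, mul_sub, sum_sub_distrib]
      exact dvd_sub hnw hgw)
    have hcomp : (f ∘ σ.symm) ∘ orbit a b ha k = f :=
      funext fun i => congrArg f (σ.symm_apply_apply i)
    have hz : zcoord a b ha k (f ∘ σ.symm) = n := by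
      rw [zcoord, hcomp, hf]
      exact sub_add_cancel n g
    exact ⟨f ∘ σ.symm, ⟨(σ.symm.sum_comp f).trans hf0,
      (zcoord_nonneg_iff ha k hab _).mp (hz ▸ hn0)⟩, hz⟩

end ZCoordinates

theorem intCast_bijOn (a b : ℕ) :
    Set.BijOn (fun (n : Fin a → ℤ) i => (n i : ℚ))
      {n : Fin a → ℤ | 0 ≤ n ∧ ∑ i, n i = b ∧ (a : ℤ) ∣ ∑ i, (i.val : ℤ) * n i}
      {z : Fin a → ℚ | (∀ i, ∃ n : ℕ, z i = n) ∧ (∑ i, z i) = b ∧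
        ∃ m : ℤ, (∑ i : Fin a, (i.val : ℚ) * z i) = (a : ℚ) * (m : ℚ)} := by
  refine ⟨?_, fun n _ n' _ h => funext fun i => Int.cast_injective (congrFun h i), ?_⟩
  · rintro n ⟨hn0, hn, m, hm⟩
    refine ⟨fun i => ⟨(n i).toNat, ?_⟩, ?_, m, ?_⟩ <;> beta_reduce
    · exact_mod_cast (Int.toNat_of_nonneg (hn0 i)).symm
    · exact_mod_cast hn
    · exact_mod_cast hm
  · rintro z ⟨hz, hsum, m, hm⟩
    choose N hN using hz
    simp only [hN] at hsum hm
    refine ⟨fun i => N i, ⟨fun i => Int.natCast_nonneg _, ?_, m, ?_⟩, funext fun i => (hN i).symm⟩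
      <;> beta_reduce
    · exact_mod_cast hsum
    · exact_mod_cast hm

theorem stmt3_general (a b : ℕ) (ha : 0 < a) (hab : Nat.Coprime a b) (k : ℤ)
    (hk_odd : a % 2 = 1 → k ≡ -(((b + 1) * ((a + 1) / 2) : ℕ) : ℤ) [ZMOD (a : ℤ)])
    (hk_even : a % 2 = 0 → k ≡ -((((b + 1) / 2) : ℕ) : ℤ) [ZMOD (a : ℤ)]) :
    Set.BijOn
      (fun c : Fin a → ℤ => fun i : Fin a =>
        xcoord a c (idxZ a ha ((i.val : ℤ) * b + k)) -
          xcoord a c (idxZ a ha (((i.val : ℤ) + 1) * b + k)) + (b : ℚ) / a)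
      {c : Fin a → ℤ | (∑ i, c i) = 0 ∧ ∀ i : Fin a,
        c ⟨(i.val + b) % a, Nat.mod_lt _ ha⟩ - c i ≤ (((b + i.val) / a : ℕ) : ℤ)}
      {z : Fin a → ℚ | (∀ i, ∃ n : ℕ, z i = n) ∧ (∑ i, z i) = b ∧
        ∃ m : ℤ, (∑ i : Fin a, (i.val : ℚ) * z i) = (a : ℚ) * (m : ℚ)} := by
  have : NeZero a := ⟨ha.ne'⟩
  have hz : (fun c : Fin a → ℤ => fun i : Fin a =>
      xcoord a c (idxZ a ha ((i.val : ℤ) * b + k)) -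
        xcoord a c (idxZ a ha (((i.val : ℤ) + 1) * b + k)) + (b : ℚ) / a) =
      (fun n i => (n i : ℚ)) ∘ zcoord a b ha k :=
    funext fun c => funext fun i => xcoord_sub_xcoord_add_div ha k c i
  rw [hz]
  exact (intCast_bijOn a b).comp
    (zcoord_bijOn ha k hab (two_mul_dvd_of_shift_condition hab hk_odd hk_even))

/-- `c ↦ z` is a bijection from the lattice points of the simplex of
`(a,b)`-cores onto `{z ∈ ℕ^a : Σ z_i = b, Σ i·z_i ≡ 0 (mod a)}`. -/
theorem stmt3 (a b : ℕ) (ha : 0 < a) (hb : 0 < b) (hab : Nat.Coprime a b) (k : ℤ)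
    (hk_odd : a % 2 = 1 → k ≡ -(((b + 1) * ((a + 1) / 2) : ℕ) : ℤ) [ZMOD (a : ℤ)])
    (hk_even : a % 2 = 0 → k ≡ -((((b + 1) / 2) : ℕ) : ℤ) [ZMOD (a : ℤ)]) :
    Set.BijOn
      (fun c : Fin a → ℤ => fun i : Fin a =>
        xcoord a c (idxZ a ha ((i.val : ℤ) * b + k)) -
          xcoord a c (idxZ a ha (((i.val : ℤ) + 1) * b + k)) + (b : ℚ) / a)
      {c : Fin a → ℤ | (∑ i, c i) = 0 ∧ ∀ i : Fin a,
        c ⟨(i.val + b) % a, Nat.mod_lt _ ha⟩ - c i ≤ (((b + i.val) / a : ℕ) : ℤ)}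
      {z : Fin a → ℚ | (∀ i, ∃ n : ℕ, z i = n) ∧ (∑ i, z i) = b ∧
        ∃ m : ℤ, (∑ i : Fin a, (i.val : ℚ) * z i) = (a : ℚ) * (m : ℚ)} :=
  stmt3_general a b ha hab k hk_odd hk_even
end

section
/- Let a, b ≥ 1 be coprime integers. Then a · #{ (z_0, …, z_{a−1}) ∈ ℕ^a : z_0 + ⋯ + z_{a−1} = b and Σ_{i=0}^{a−1} i·z_i ≡ 0 (mod a) } = C(a+b−1, b), the binomial coefficient; equivalently this cardinality equals (1/(a+b))·C(a+b, a). -/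
/-!
Rotating a vector `z : Fin a → ℕ` of sum `b` by `c` adds `c * b` to its weight `Σ i * z i`
in `ℤ/a`. As `b` is a unit mod `a`, rotations permute the `a` fibres of the weight transitively,
so exactly a `1/a` fraction of the `C(a+b-1, b)` vectors of sum `b` have weight `0`.
-/

open Finset

theorem Nat.card_sum_eq_multichoose (α : Type*) [Fintype α] (b : ℕ) :
    Nat.card {z : α → ℕ // ∑ i, z i = b} = (Fintype.card α).multichoose b := by
  classical
  rw [← Nat.card_congr (Sym.equivNatSumOfFintype α b), Nat.card_eq_fintype_card,
    Sym.card_sym_eq_multichoose]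

theorem Nat.add_mul_choose_add_sub_one {a : ℕ} (ha : 1 ≤ a) (b : ℕ) :
    (a + b) * (a + b - 1).choose b = a * (a + b).choose a := by
  obtain ⟨m, rfl⟩ := Nat.exists_eq_add_of_le' ha
  rw [Nat.add_right_comm, Nat.add_sub_cancel, ← Nat.choose_symm_add,
    Nat.add_one_mul_choose_eq, mul_comm]

namespace Fin

open Fin.CommRing

variable {n : ℕ} [NeZero n]

theorem isUnit_natCast_of_coprime {b : ℕ} (h : n.Coprime b) : IsUnit (b : Fin n) := by
  simpa using ((ZMod.isUnit_iff_coprime b n).2 h.symm).map (ZMod.finEquiv n).symm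

theorem natCast_eq_zero_iff_mod_eq_zero (N : ℕ) : (N : Fin n) = 0 ↔ N % n = 0 := by
  simp [Fin.ext_iff, val_natCast]

def weight (z : Fin n → ℕ) : Fin n := ∑ i, i * (z i : Fin n)

theorem weight_eq_zero_iff (z : Fin n → ℕ) :
    weight z = 0 ↔ (∑ i : Fin n, i.val * z i) % n = 0 := by
  simp [weight, ← natCast_eq_zero_iff_mod_eq_zero]

def rotate (c : Fin n) : (Fin n → ℕ) ≃ (Fin n → ℕ) :=
  (Equiv.subRight c).symm.arrowCongr (Equiv.refl ℕ)

theorem rotate_apply (c : Fin n) (z : Fin n → ℕ) (i : Fin n) : rotate c z i = z (i - c) := rfl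

theorem sum_rotate (c : Fin n) (z : Fin n → ℕ) : ∑ i, rotate c z i = ∑ i, z i :=
  Equiv.sum_comp (Equiv.subRight c) z

theorem weight_rotate (c : Fin n) (z : Fin n → ℕ) :
    weight (rotate c z) = weight z + c * ((∑ i, z i : ℕ) : Fin n) := by
  rw [weight, ← Equiv.sum_comp (Equiv.addRight c)]
  simp only [Equiv.coe_addRight, rotate_apply, add_sub_cancel_right, add_mul, sum_add_distrib,
    weight, Nat.cast_sum, mul_sum]

theorem sum_rotate_symm (c : Fin n) (z : Fin n → ℕ) : ∑ i, (rotate c).symm z i = ∑ i, z i := by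
  rw [← sum_rotate c, Equiv.apply_symm_apply]

theorem weight_rotate_symm (c : Fin n) (z : Fin n → ℕ) :
    weight ((rotate c).symm z) = weight z - c * ((∑ i, z i : ℕ) : Fin n) := by
  conv_rhs => rw [← (rotate c).apply_symm_apply z, weight_rotate, sum_rotate]
  ring

def weightZeroProdEquiv {b : ℕ} (u : (Fin n)ˣ) (hu : (u : Fin n) = b) :
    Fin n × {z : Fin n → ℕ // ∑ i, z i = b ∧ weight z = 0} ≃ {z : Fin n → ℕ // ∑ i, z i = b} where
  toFun p := ⟨rotate (p.1 * ↑u⁻¹) p.2.1, by rw [sum_rotate, p.2.2.1]⟩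
  invFun s := (weight s.1, ⟨(rotate (weight s.1 * ↑u⁻¹)).symm s.1, by
    rw [sum_rotate_symm, s.2], by
    rw [weight_rotate_symm, s.2, ← hu, Units.inv_mul_cancel_right, sub_self]⟩)
  left_inv := by
    rintro ⟨k, z, hsum, hz⟩
    have hk : weight (rotate (k * (↑u⁻¹ : Fin n)) z) = k := by
      rw [weight_rotate, hsum, hz, ← hu, zero_add, Units.inv_mul_cancel_right]
    simp [hk]
  right_inv s := by simp

theorem card_sum_eq_mul_card_weight_eq_zero (b : ℕ) (hb : n.Coprime b) :
    Nat.card {z : Fin n → ℕ // ∑ i, z i = b}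
      = n * Nat.card {z : Fin n → ℕ // ∑ i, z i = b ∧ weight z = 0} := by
  obtain ⟨u, hu⟩ := isUnit_natCast_of_coprime hb
  rw [← Nat.card_congr (weightZeroProdEquiv u hu), Nat.card_prod, Nat.card_eq_fintype_card,
    Fintype.card_fin]

end Fin

theorem stmt4_general (a b : ℕ) (ha : 1 ≤ a) (hab : Nat.Coprime a b) :
    a * Nat.card {z : Fin a → ℕ // (∑ i, z i) = b ∧ (∑ i : Fin a, i.val * z i) % a = 0}
        = Nat.choose (a + b - 1) b ∧
    (a + b) * Nat.card {z : Fin a → ℕ // (∑ i, z i) = b ∧ (∑ i : Fin a, i.val * z i) % a = 0}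
        = Nat.choose (a + b) a := by
  have : NeZero a := NeZero.of_pos ha
  have hcount : a * Nat.card {z : Fin a → ℕ // (∑ i, z i) = b ∧ (∑ i : Fin a, i.val * z i) % a = 0}
      = (a + b - 1).choose b := by
    simp_rw [← Fin.weight_eq_zero_iff, ← Fin.card_sum_eq_mul_card_weight_eq_zero b hab,
      Nat.card_sum_eq_multichoose, Fintype.card_fin, Nat.multichoose_eq]
  refine ⟨hcount, Nat.eq_of_mul_eq_mul_left ha ?_⟩
  rw [mul_left_comm, hcount, Nat.add_mul_choose_add_sub_one ha]

/-- `a` times the number of `z ∈ ℕ^a` with `Σ z_i = b` and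
`Σ i·z_i ≡ 0 (mod a)` equals `C(a+b−1, b)`; equivalently this count is
`(1/(a+b))·C(a+b, a)`. -/
theorem stmt4 (a b : ℕ) (ha : 1 ≤ a) (hb : 1 ≤ b) (hab : Nat.Coprime a b) :
    a * Nat.card {z : Fin a → ℕ // (∑ i, z i) = b ∧ (∑ i : Fin a, i.val * z i) % a = 0}
        = Nat.choose (a + b - 1) b ∧
    (a + b) * Nat.card {z : Fin a → ℕ // (∑ i, z i) = b ∧ (∑ i : Fin a, i.val * z i) % a = 0}
        = Nat.choose (a + b) a :=
  stmt4_general a b ha hab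
end

section
/- Let a ≥ 1 and b ≥ 0 be integers. Then #{ (z_0, …, z_{a−1}) ∈ ℕ^a : z_0 + ⋯ + z_{a−1} = b, Σ_{i=0}^{a−1} i·z_i ≡ 0 (mod a), and z_i = z_{a−i} for all 1 ≤ i ≤ a−1 } = C(⌊a/2⌋ + ⌊b/2⌋, ⌊a/2⌋). -/
/-!
A self-dual `z` is determined by its values at the representatives `0, 1, …, ⌊a/2⌋` of the
orbits of negation on `ℤ/a`. Pairing `i` with `a - i` gives `2 ∑ i z_i = a (b - z_0)`, so the
determinant condition says that `b - z_0` is even, i.e. that the multiplicity of the fixed point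
`a/2` (present when `a` is even) is even. Halving that one coordinate identifies the set with the
`w ∈ ℕ^⌊a/2⌋` such that `z_0 = b - 2 ∑ w`, i.e. with `∑ w ≤ ⌊b/2⌋`, and stars and bars counts
these.
-/

open Finset

theorem card_sum_le_eq_choose (ι : Type*) [Fintype ι] (t : ℕ) :
    Nat.card {f : ι → ℕ // ∑ i, f i ≤ t} = (Fintype.card ι + t).choose t := by
  classical
  let slack : {f : ι → ℕ // ∑ i, f i ≤ t} ≃ {g : Option ι → ℕ // ∑ o, g o = t} :=
    { toFun f := ⟨fun o => o.elim (t - ∑ i, f.1 i) f.1, by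
        have := f.2; simp only [Fintype.sum_option, Option.elim]; omega⟩
      invFun g := ⟨fun i => g.1 (some i), by
        have := g.2; rw [Fintype.sum_option] at this; dsimp only; omega⟩
      left_inv f := rfl
      right_inv g := by
        ext (_ | i)
        · have := g.2; rw [Fintype.sum_option] at this; simp only [Option.elim]; omega
        · rfl }
  rw [Nat.card_congr (slack.trans (Sym.equivNatSumOfFintype _ t).symm), Nat.card_eq_fintype_card,
    Sym.card_sym_eq_choose, Fintype.card_option, Nat.add_right_comm, Nat.add_sub_cancel]

theorem Nat.dvd_sum_iff_of_dvd_of_ne {ι : Type*} [DecidableEq ι] {s : Finset ι} {f : ι → ℕ}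
    {n : ℕ} (i₀ : ι) (h : ∀ i ∈ s, i ≠ i₀ → n ∣ f i) : n ∣ ∑ i ∈ s, f i ↔ ∀ i ∈ s, n ∣ f i := by
  refine ⟨fun hsum i hi => ?_, dvd_sum⟩
  by_cases hi₀ : i = i₀
  · subst hi₀
    rw [← add_sum_erase s f hi] at hsum
    exact (Nat.dvd_add_left <| dvd_sum fun j hj =>
      h j (mem_of_mem_erase hj) (ne_of_mem_erase hj)).mp hsum
  · exact h i hi hi₀

theorem sum_Ico_one_eq_sum_range_add_reflect {M : Type*} [AddCommMonoid M] (g : ℕ → M) (a : ℕ) :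
    ∑ i ∈ Ico 1 a, g i =
      ∑ j ∈ range (a / 2), (g (j + 1) + if 2 * (j + 1) < a then g (a - (j + 1)) else 0) := by
  rcases Nat.eq_zero_or_pos a with rfl | ha
  · simp
  have lower : ∑ j ∈ range (a / 2), g (j + 1) = ∑ i ∈ Ico 1 (a / 2 + 1), g i := by
    rw [sum_Ico_eq_sum_range, Nat.add_sub_cancel]
    simp only [add_comm 1]
  have upper : ∑ j ∈ range (a / 2), (if 2 * (j + 1) < a then g (a - (j + 1)) else 0) =
      ∑ i ∈ Ico (a / 2 + 1) a, g i := by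
    rw [← sum_filter]
    refine sum_nbij' (fun j => a - (j + 1)) (fun i => a - (i + 1)) ?_ ?_ ?_ ?_ ?_ <;>
      simp only [mem_filter, mem_range, mem_Ico, implies_true] <;> intros <;> omega
  rw [sum_add_distrib, lower, upper, sum_Ico_consecutive _ (by omega) (by omega)]

theorem Fin.sum_univ_eq_sum_range_ofNat {M : Type*} [AddCommMonoid M] {a : ℕ} [NeZero a]
    (h : Fin a → M) : ∑ i, h i = ∑ k ∈ range a, h (Fin.ofNat a k) := by
  simp only [← Fin.sum_univ_eq_sum_range, Fin.ofNat_val_eq_self]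

/-- The size of the orbit `{k, a - k}` of negation on `ℤ/a`, for `0 < k ≤ a / 2`. -/
def negOrbitCard (a k : ℕ) : ℕ := if 2 * k = a then 1 else 2

theorem negOrbitCard_pos {a k : ℕ} : 0 < negOrbitCard a k := by
  unfold negOrbitCard; split_ifs <;> omega

theorem negOrbitCard_mul_two_mul_div (a k x : ℕ) :
    negOrbitCard a k * (2 * x / negOrbitCard a k) = 2 * x := by
  unfold negOrbitCard; split_ifs <;> omega

section Reflection

variable {a : ℕ} {Z : ℕ → ℕ}

theorem sum_Ico_one_eq_of_reflect (hZ : ∀ i, 0 < i → i < a → Z (a - i) = Z i) :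
    ∑ i ∈ Ico 1 a, Z i = ∑ j ∈ range (a / 2), negOrbitCard a (j + 1) * Z (j + 1) := by
  rw [sum_Ico_one_eq_sum_range_add_reflect]
  refine sum_congr rfl fun j hj => ?_
  rw [mem_range] at hj
  unfold negOrbitCard
  split_ifs <;> first | omega | rw [hZ _ (by omega) (by omega)]; ring

theorem two_mul_sum_range_mul_eq_of_reflect (hZ : ∀ i, 0 < i → i < a → Z (a - i) = Z i) :
    2 * ∑ i ∈ range a, i * Z i = a * ∑ i ∈ Ico 1 a, Z i := by
  rcases Nat.eq_zero_or_pos a with rfl | ha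
  · simp
  have reflect : ∑ i ∈ Ico 1 a, i * Z i = ∑ i ∈ Ico 1 a, (a - i) * Z i := by
    refine sum_nbij' (fun i => a - i) (fun i => a - i) ?_ ?_ ?_ ?_ ?_ <;>
      simp only [mem_Ico] <;> intros <;>
      first | omega | rw [hZ _ (by omega) (by omega)]; congr 1; omega
  rw [sum_range_eq_add_Ico _ ha, zero_mul, zero_add, two_mul]
  nth_rw 2 [reflect]
  rw [← sum_add_distrib, mul_sum]
  refine sum_congr rfl fun i hi => ?_
  rw [mem_Ico] at hi
  rw [← add_mul, Nat.add_sub_cancel' hi.2.le]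

theorem dvd_sum_range_mul_iff_of_reflect (ha : 0 < a)
    (hZ : ∀ i, 0 < i → i < a → Z (a - i) = Z i) :
    a ∣ ∑ i ∈ range a, i * Z i ↔ ∀ j ∈ range (a / 2), 2 ∣ negOrbitCard a (j + 1) * Z (j + 1) := by
  rw [← Nat.mul_dvd_mul_iff_left two_pos, two_mul_sum_range_mul_eq_of_reflect hZ, mul_comm 2,
    Nat.mul_dvd_mul_iff_left ha, sum_Ico_one_eq_of_reflect hZ]
  refine Nat.dvd_sum_iff_of_dvd_of_ne (a / 2 - 1) fun j hj hne => ?_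
  rw [mem_range] at hj
  rw [negOrbitCard, if_neg (by omega)]
  exact dvd_mul_right 2 _

end Reflection

def IsSelfDualTrivDet (a b : ℕ) (z : Fin a → ℕ) : Prop :=
  (∑ i, z i) = b ∧ (∑ i : Fin a, i.val * z i) % a = 0 ∧ ∀ i : Fin a, z (-i) = z i

section NegInvariant

variable {a : ℕ} [NeZero a] {z : Fin a → ℕ}

theorem ofNat_sub_of_neg_invariant (hz : ∀ i, z (-i) = z i) {i : ℕ} (hi₀ : 0 < i) (hia : i < a) :
    z (Fin.ofNat a (a - i)) = z (Fin.ofNat a i) := by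
  rw [← hz]
  congr 1
  ext
  simp only [Fin.val_neg', Fin.val_ofNat, Nat.mod_eq_of_lt hia,
    Nat.mod_eq_of_lt (by omega : a - i < a), Nat.sub_sub_self hia.le]

theorem sum_eq_of_neg_invariant (hz : ∀ i, z (-i) = z i) :
    ∑ i, z i = z 0 + ∑ j : Fin (a / 2), negOrbitCard a (j + 1) * z (Fin.ofNat a (j + 1)) := by
  rw [Fin.sum_univ_eq_sum_range_ofNat, sum_range_eq_add_Ico _ (NeZero.pos a),
    sum_Ico_one_eq_of_reflect fun i => ofNat_sub_of_neg_invariant hz,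
    Fin.sum_univ_eq_sum_range (fun j => negOrbitCard a (j + 1) * z (Fin.ofNat a (j + 1)))]
  rfl

theorem sum_val_mul_mod_eq_zero_iff (hz : ∀ i, z (-i) = z i) :
    (∑ i : Fin a, i.val * z i) % a = 0 ↔
      ∀ j : Fin (a / 2), 2 ∣ negOrbitCard a (j + 1) * z (Fin.ofNat a (j + 1)) := by
  have hsum : ∑ i : Fin a, i.val * z i = ∑ k ∈ range a, k * z (Fin.ofNat a k) := by
    rw [Fin.sum_univ_eq_sum_range_ofNat]
    refine sum_congr rfl fun k hk => ?_
    rw [Fin.val_ofNat, Nat.mod_eq_of_lt (mem_range.mp hk)]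
  rw [← Nat.dvd_iff_mod_eq_zero, hsum,
    dvd_sum_range_mul_iff_of_reflect (NeZero.pos a) fun i => ofNat_sub_of_neg_invariant hz,
    Fin.forall_iff]
  simp only [mem_range]

end NegInvariant

section HalfCoords

variable {a : ℕ} [NeZero a]

def halfCoords (z : Fin a → ℕ) (j : Fin (a / 2)) : ℕ :=
  negOrbitCard a (j + 1) * z (Fin.ofNat a (j + 1)) / 2

def ofHalfCoords (b : ℕ) (w : Fin (a / 2) → ℕ) (i : Fin a) : ℕ :=
  if h : (i : ℕ) = 0 then b - 2 * ∑ j, w j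
  else 2 * w ⟨min (i : ℕ) (a - (i : ℕ)) - 1, by have := i.isLt; omega⟩ /
    negOrbitCard a (min (i : ℕ) (a - (i : ℕ)))

theorem ofHalfCoords_zero (b : ℕ) (w : Fin (a / 2) → ℕ) :
    ofHalfCoords b w 0 = b - 2 * ∑ j, w j := by
  simp [ofHalfCoords]

theorem ofHalfCoords_ofNat_succ (b : ℕ) (w : Fin (a / 2) → ℕ) (j : Fin (a / 2)) :
    ofHalfCoords b w (Fin.ofNat a (j + 1)) = 2 * w j / negOrbitCard a (j + 1) := by
  have hj : (j : ℕ) + 1 < a := by have := j.isLt; omega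
  have hmin : min ((j : ℕ) + 1) (a - (j + 1)) = j + 1 := by have := j.isLt; omega
  simp only [ofHalfCoords, Fin.val_ofNat, Nat.mod_eq_of_lt hj, hmin, Nat.add_sub_cancel,
    Nat.add_one_ne_zero, dite_false, Fin.eta]

theorem ofHalfCoords_neg (b : ℕ) (w : Fin (a / 2) → ℕ) (i : Fin a) :
    ofHalfCoords b w (-i) = ofHalfCoords b w i := by
  by_cases hi : (i : ℕ) = 0
  · rw [show i = 0 from Fin.ext hi, neg_zero]
  have hneg : ((-i : Fin a) : ℕ) = a - i := by
    rw [Fin.val_neg', Nat.mod_eq_of_lt (by omega)]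
  have hmin : min (a - i) (a - (a - i)) = min (i : ℕ) (a - (i : ℕ)) := by omega
  simp only [ofHalfCoords, hneg, hmin, hi, dite_false, show a - i ≠ 0 by omega]

variable {b : ℕ} {z : Fin a → ℕ}

theorem two_mul_halfCoords (hz : IsSelfDualTrivDet a b z) (j : Fin (a / 2)) :
    2 * halfCoords z j = negOrbitCard a (j + 1) * z (Fin.ofNat a (j + 1)) :=
  Nat.mul_div_cancel' ((sum_val_mul_mod_eq_zero_iff hz.2.2).1 hz.2.1 j)

theorem add_two_mul_sum_halfCoords (hz : IsSelfDualTrivDet a b z) :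
    z 0 + 2 * ∑ j, halfCoords z j = b := by
  rw [mul_sum, sum_congr rfl fun j _ => two_mul_halfCoords hz j, ← sum_eq_of_neg_invariant hz.2.2,
    hz.1]

theorem sum_halfCoords_le (hz : IsSelfDualTrivDet a b z) : ∑ j, halfCoords z j ≤ b / 2 := by
  have := add_two_mul_sum_halfCoords hz
  omega

theorem ofHalfCoords_halfCoords (hz : IsSelfDualTrivDet a b z) :
    ofHalfCoords b (halfCoords z) = z := by
  funext i
  by_cases hi : (i : ℕ) = 0
  · rw [show i = 0 from Fin.ext hi, ofHalfCoords_zero]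
    have := add_two_mul_sum_halfCoords hz
    omega
  have hrep : z (Fin.ofNat a (min (i : ℕ) (a - (i : ℕ)))) = z i := by
    rcases le_total (i : ℕ) (a - i) with h | h
    · rw [min_eq_left h, Fin.ofNat_val_eq_self]
    · rw [min_eq_right h, ofNat_sub_of_neg_invariant hz.2.2 (by omega) i.isLt,
        Fin.ofNat_val_eq_self]
  simp only [ofHalfCoords, hi, dite_false, two_mul_halfCoords hz]
  rw [Nat.sub_add_cancel (by omega), Nat.mul_div_cancel_left _ negOrbitCard_pos, hrep]

theorem halfCoords_ofHalfCoords (w : Fin (a / 2) → ℕ) : halfCoords (ofHalfCoords b w) = w := by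
  funext j
  rw [halfCoords, ofHalfCoords_ofNat_succ, negOrbitCard_mul_two_mul_div,
    Nat.mul_div_cancel_left _ two_pos]

theorem isSelfDualTrivDet_ofHalfCoords {w : Fin (a / 2) → ℕ} (hw : ∑ j, w j ≤ b / 2) :
    IsSelfDualTrivDet a b (ofHalfCoords b w) := by
  have hsym := ofHalfCoords_neg b w
  have hterm (j : Fin (a / 2)) :
      negOrbitCard a (j + 1) * ofHalfCoords b w (Fin.ofNat a (j + 1)) = 2 * w j := by
    rw [ofHalfCoords_ofNat_succ, negOrbitCard_mul_two_mul_div]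
  refine ⟨?_, (sum_val_mul_mod_eq_zero_iff hsym).2 fun j => hterm j ▸ dvd_mul_right 2 _, hsym⟩
  rw [sum_eq_of_neg_invariant hsym, sum_congr rfl fun j _ => hterm j, ← mul_sum,
    ofHalfCoords_zero]
  omega

variable (a b) in
def selfDualEquivHalfCoords :
    {z // IsSelfDualTrivDet a b z} ≃ {w : Fin (a / 2) → ℕ // ∑ j, w j ≤ b / 2} where
  toFun z := ⟨halfCoords z.1, sum_halfCoords_le z.2⟩
  invFun w := ⟨ofHalfCoords b w.1, isSelfDualTrivDet_ofHalfCoords w.2⟩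
  left_inv z := Subtype.ext (ofHalfCoords_halfCoords z.2)
  right_inv w := Subtype.ext (halfCoords_ofHalfCoords w.1)

end HalfCoords

/-- the number of `z ∈ ℕ^a` with `Σ z_i = b`, `Σ i·z_i ≡ 0 (mod a)` and
`z_i = z_{a−i}` for `1 ≤ i ≤ a−1` (i.e. `z_{−i} = z_i` in `Fin a`) is
`C(⌊a/2⌋ + ⌊b/2⌋, ⌊a/2⌋)`. -/
theorem stmt9 (a b : ℕ) (ha : 1 ≤ a) :
    Nat.card {z : Fin a → ℕ // (∑ i, z i) = b ∧ (∑ i : Fin a, i.val * z i) % a = 0 ∧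
        ∀ i : Fin a, z (-i) = z i}
      = Nat.choose (a / 2 + b / 2) (a / 2) := by
  have : NeZero a := ⟨by omega⟩
  calc _ = Nat.card {w : Fin (a / 2) → ℕ // ∑ j, w j ≤ b / 2} :=
        Nat.card_congr (selfDualEquivHalfCoords a b)
    _ = _ := by rw [card_sum_le_eq_choose, Fintype.card_fin, Nat.choose_symm_add]
end

section
/- For every integer n ≥ 1, Σ_{σ ∈ S_n} q^{siz(σ)}·t^{maj(σ)} = Π_{k=1}^{n} [k]_{q^{n+1−k}·t}, as an identity of polynomials in q and t, where [k]_x = 1 + x + x² + ⋯ + x^{k−1}. -/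
/-- The descents of a permutation of `Fin n`, encoded as the pairs of adjacent positions
`(i, i+1)` (0-indexed) with `σ(i) > σ(i+1)`; the 1-indexed descent position is `i + 1`. -/
def descPairs (n : ℕ) (σ : Equiv.Perm (Fin n)) : Finset (Fin n × Fin n) :=
  Finset.univ.filter fun p => p.2.val = p.1.val + 1 ∧ σ p.2 < σ p.1

/-- The major index `maj(σ) = Σ_{d ∈ DES(σ)} d` (1-indexed descent positions). -/
def maj (n : ℕ) (σ : Equiv.Perm (Fin n)) : ℕ :=
  ∑ p ∈ descPairs n σ, (p.1.val + 1)

/-- The inversion number `inv(σ)`. -/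
def inv (n : ℕ) (σ : Equiv.Perm (Fin n)) : ℕ :=
  (Finset.univ.filter fun p : Fin n × Fin n => p.1 < p.2 ∧ σ p.2 < σ p.1).card

/-- The size statistic `siz(σ) = Σ_{d ∈ DES(σ)} (n+1−d)·d − inv(σ)`
(1-indexed descent positions `d = i + 1`, so `n+1−d = n − i`). -/
def siz (n : ℕ) (σ : Equiv.Perm (Fin n)) : ℕ :=
  (∑ p ∈ descPairs n σ, (n - p.1.val) * (p.1.val + 1)) - inv n σ

/-!
Write `ρ = finRotate (m + 1)`, which raises every value by one cyclically, and let `τ̂ ∈ S_{m+1}`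
extend `τ ∈ S_m` by fixing the last point. Every `σ ∈ S_{m+1}` is uniquely `ρ⁻ʲ * τ̂` with
`0 ≤ j ≤ m`. Extending leaves `maj` and `inv` unchanged and adds `maj τ` to the weighted descent sum
`Σ (n + 1 - d) d`. Applying `ρ⁻¹` turns the minimum into the maximum; when the minimum is not in the
last position, the descent ending at it moves one step to the right (or one appears at position 1
if the minimum comes first), so `maj` grows by one, and the changes of the weighted sum and of
`inv` combine to raise `siz` by one too. Hence `siz (ρ⁻ʲ τ̂) = siz τ + maj τ + j` and
`maj (ρ⁻ʲ τ̂) = maj τ + j`, so the generating function satisfies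
`F_{m+1}(q, t) = F_m(q, q t) · [m + 1]_{q t}`, which unrolls to the product. The same recursion
shows that `inv` never exceeds the weighted descent sum, so the truncated subtraction in `siz`
is harmless.
-/

namespace SizMaj

open Finset Equiv

variable {m : ℕ}

lemma finRotate_mul_lt_iff (σ : Perm (Fin (m + 1))) (a b : Fin (m + 1)) :
    (finRotate (m + 1) * σ) b < (finRotate (m + 1) * σ) a ↔
      σ a ≠ Fin.last m ∧ (σ b < σ a ∨ σ b = Fin.last m) := by
  rw [Perm.mul_apply, Perm.mul_apply]
  by_cases ha : σ a = Fin.last m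
  · simp [ha]
  by_cases hb : σ b = Fin.last m
  · rw [hb, finRotate_last, Fin.lt_def, coe_finRotate_of_ne_last ha]
    simp [ha]
  · rw [Fin.lt_def, coe_finRotate_of_ne_last ha, coe_finRotate_of_ne_last hb]
    simp only [ne_eq, ha, hb, not_false_eq_true, true_and, or_false, Fin.lt_def]
    omega

-- `ρ * σ` turns the maximum, at position `p`, into the minimum and keeps all other comparisons.
lemma sum_filter_finRotate_mul_lt_add {M : Type*} [AddCommMonoid M] (σ : Perm (Fin (m + 1)))
    {p : Fin (m + 1)} (hp : σ p = Fin.last m) (S : Finset (Fin (m + 1) × Fin (m + 1)))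
    (hS : ∀ q ∈ S, q.1 ≠ q.2) (w : Fin (m + 1) × Fin (m + 1) → M) :
    ∑ q ∈ S with (finRotate (m + 1) * σ) q.2 < (finRotate (m + 1) * σ) q.1, w q
        + ∑ q ∈ S with q.1 = p, w q =
      ∑ q ∈ S with σ q.2 < σ q.1, w q + ∑ q ∈ S with q.2 = p, w q := by
  simp only [sum_filter, ← sum_add_distrib]
  refine sum_congr rfl fun q hq => ?_
  have hlast : ∀ x, σ x = Fin.last m ↔ x = p := fun x => by rw [← hp, σ.injective.eq_iff]
  have hne := hS q hq
  simp only [finRotate_mul_lt_iff, ne_eq, hlast]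
  by_cases h1 : q.1 = p <;> by_cases h2 : q.2 = p
  · exact absurd (h1.trans h2.symm) hne
  · have : σ q.2 < σ p := by rw [hp, Fin.lt_last_iff_ne_last, ne_eq, hlast]; exact h2
    simp [h1, h2, this]
  · have : ¬ σ p < σ q.1 := by rw [hp]; exact not_lt.2 (Fin.le_last _)
    simp [h1, h2, this]
  · simp [h1, h2]

def adjacentPairs (n : ℕ) : Finset (Fin n × Fin n) := {q | q.2.val = q.1.val + 1}

def increasingPairs (n : ℕ) : Finset (Fin n × Fin n) := {q | q.1 < q.2}

@[simp]
lemma mem_adjacentPairs {n : ℕ} {q : Fin n × Fin n} :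
    q ∈ adjacentPairs n ↔ q.2.val = q.1.val + 1 := by
  simp [adjacentPairs]

@[simp]
lemma mem_increasingPairs {n : ℕ} {q : Fin n × Fin n} : q ∈ increasingPairs n ↔ q.1 < q.2 := by
  simp [increasingPairs]

lemma descPairs_eq_filter (n : ℕ) (σ : Perm (Fin n)) :
    descPairs n σ = {q ∈ adjacentPairs n | σ q.2 < σ q.1} := by
  rw [descPairs, adjacentPairs, filter_filter]

lemma filter_adjacentPairs_fst_eq {p : Fin (m + 1)} (hp : p ≠ Fin.last m) :
    {q ∈ adjacentPairs (m + 1) | q.1 = p} =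
      {(p, ⟨p + 1, by have := Fin.val_lt_last hp; omega⟩)} := by
  ext ⟨a, b⟩
  simp only [mem_filter, mem_adjacentPairs, mem_singleton, Prod.mk.injEq, Fin.ext_iff]
  omega

lemma sum_filter_adjacentPairs_snd_eq (p : Fin (m + 1)) (g : ℕ → ℕ) :
    ∑ q ∈ adjacentPairs (m + 1) with q.2 = p, g q.1.val =
      if p = 0 then 0 else g (p - 1) := by
  split_ifs with hp
  · refine sum_eq_zero fun q hq => ?_
    rw [mem_filter, mem_adjacentPairs, hp] at hq
    simp only [hq.2, Fin.val_zero] at hq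
    omega
  · have hpos : 0 < p.val := Fin.pos_iff_ne_zero.2 hp
    rw [show {q ∈ adjacentPairs (m + 1) | q.2 = p} =
        {(⟨p - 1, by omega⟩, p)} by
      ext ⟨a, b⟩
      simp only [mem_filter, mem_adjacentPairs, mem_singleton, Prod.mk.injEq, Fin.ext_iff]
      omega, sum_singleton]

lemma sum_descPairs_finRotate_mul (σ : Perm (Fin (m + 1))) {p : Fin (m + 1)}
    (hσp : σ p = Fin.last m) (hp : p ≠ Fin.last m) (g : ℕ → ℕ) :
    ∑ q ∈ descPairs (m + 1) (finRotate (m + 1) * σ), g q.1.val + g p =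
      ∑ q ∈ descPairs (m + 1) σ, g q.1.val + if p = 0 then 0 else g (p - 1) := by
  have key := sum_filter_finRotate_mul_lt_add σ hσp (adjacentPairs (m + 1))
    (fun q hq h => by rw [mem_adjacentPairs, h] at hq; omega) (fun q => g q.1.val)
  rwa [filter_adjacentPairs_fst_eq hp, sum_singleton, sum_filter_adjacentPairs_snd_eq,
    ← descPairs_eq_filter, ← descPairs_eq_filter] at key

lemma inv_eq_card_filter (n : ℕ) (σ : Perm (Fin n)) :
    inv n σ = #{q ∈ increasingPairs n | σ q.2 < σ q.1} := by
  rw [inv, increasingPairs, filter_filter]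

lemma card_filter_increasingPairs_fst_eq (p : Fin (m + 1)) :
    #{q ∈ increasingPairs (m + 1) | q.1 = p} = m - p := by
  have : {q ∈ increasingPairs (m + 1) | q.1 = p} =
      (Ioi p).map (Function.Embedding.sectR p _) := by
    ext ⟨a, b⟩
    simp only [mem_filter, mem_increasingPairs, mem_map, Function.Embedding.sectR_apply, mem_Ioi,
      Prod.mk.injEq]
    aesop
  rw [this, card_map, Fin.card_Ioi, Nat.add_sub_cancel]

lemma card_filter_increasingPairs_snd_eq (p : Fin (m + 1)) :
    #{q ∈ increasingPairs (m + 1) | q.2 = p} = p := by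
  have : {q ∈ increasingPairs (m + 1) | q.2 = p} =
      (Iio p).map (Function.Embedding.sectL _ p) := by
    ext ⟨a, b⟩
    simp only [mem_filter, mem_increasingPairs, mem_map, Function.Embedding.sectL_apply, mem_Iio,
      Prod.mk.injEq]
    aesop
  rw [this, card_map, Fin.card_Iio]

lemma inv_finRotate_mul (σ : Perm (Fin (m + 1))) {p : Fin (m + 1)} (hσp : σ p = Fin.last m) :
    inv (m + 1) (finRotate (m + 1) * σ) + (m - p) = inv (m + 1) σ + p := by
  have key := sum_filter_finRotate_mul_lt_add σ hσp (increasingPairs (m + 1))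
    (fun q hq h => by rw [mem_increasingPairs, h] at hq; exact lt_irrefl _ hq) (fun _ => 1)
  simpa only [← card_eq_sum_ones, card_filter_increasingPairs_fst_eq,
    card_filter_increasingPairs_snd_eq, ← inv_eq_card_filter] using key

def descWeight (n : ℕ) (σ : Perm (Fin n)) : ℕ :=
  ∑ q ∈ descPairs n σ, (n - q.1.val) * (q.1.val + 1)

lemma siz_eq_descWeight_sub_inv (n : ℕ) (σ : Perm (Fin n)) :
    siz n σ = descWeight n σ - inv n σ := rfl

lemma maj_finRotate_mul (σ : Perm (Fin (m + 1))) (hσ : σ (Fin.last m) ≠ Fin.last m) :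
    maj (m + 1) σ = maj (m + 1) (finRotate (m + 1) * σ) + 1 := by
  set p := σ.symm (Fin.last m)
  have hσp : σ p = Fin.last m := σ.apply_symm_apply _
  have hp : p ≠ Fin.last m := fun h => hσ (h ▸ hσp)
  have key := sum_descPairs_finRotate_mul σ hσp hp (· + 1)
  unfold maj
  split_ifs at key with h0
  · simp only [h0, Fin.val_zero] at key; omega
  · have : (p : ℕ) ≠ 0 := Fin.val_ne_of_ne h0
    omega

lemma descWeight_sub_inv_finRotate_mul (σ : Perm (Fin (m + 1)))
    (hσ : σ (Fin.last m) ≠ Fin.last m) :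
    (descWeight (m + 1) σ : ℤ) - inv (m + 1) σ =
      descWeight (m + 1) (finRotate (m + 1) * σ) - inv (m + 1) (finRotate (m + 1) * σ) + 1 := by
  set p := σ.symm (Fin.last m)
  have hσp : σ p = Fin.last m := σ.apply_symm_apply _
  have hp : p ≠ Fin.last m := fun h => hσ (h ▸ hσp)
  have hpm : (p : ℕ) < m := Fin.val_lt_last hp
  have hW : descWeight (m + 1) (finRotate (m + 1) * σ) + (m + 1 - p) * (p + 1) =
      descWeight (m + 1) σ + if p = 0 then 0 else (m + 1 - (p - 1)) * (p - 1 + 1) :=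
    sum_descPairs_finRotate_mul σ hσp hp (fun i => (m + 1 - i) * (i + 1))
  have hinv := inv_finRotate_mul σ hσp
  split_ifs at hW with h0
  · simp only [h0, Fin.val_zero] at hW hinv ⊢
    omega
  · have : (p : ℕ) ≠ 0 := Fin.val_ne_of_ne h0
    have e1 : m + 1 - ((p : ℕ) - 1) = (m + 1 - p) + 1 := by omega
    have e2 : (p : ℕ) - 1 + 1 = p := by omega
    rw [e1, e2] at hW
    zify [hpm.le, (by omega : (p : ℕ) ≤ m + 1)] at hW hinv
    linear_combination hinv - hW

def extendLast (τ : Perm (Fin m)) : Perm (Fin (m + 1)) :=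
  (finSuccEquivLast.trans τ.optionCongr).trans finSuccEquivLast.symm

@[simp]
lemma extendLast_castSucc (τ : Perm (Fin m)) (x : Fin m) :
    extendLast τ x.castSucc = (τ x).castSucc := by
  simp [extendLast]

@[simp]
lemma extendLast_last (τ : Perm (Fin m)) : extendLast τ (Fin.last m) = Fin.last m := by
  simp [extendLast]

lemma extendLast_injective : Function.Injective (extendLast (m := m)) := fun τ τ' h =>
  Equiv.ext fun x => Fin.castSucc_injective m <| by
    rw [← extendLast_castSucc, ← extendLast_castSucc, h]

lemma filter_eq_map_castSucc (P : Fin (m + 1) × Fin (m + 1) → Prop) [DecidablePred P]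
    (hP : ∀ q, P q → q.1 ≠ Fin.last m ∧ q.2 ≠ Fin.last m) :
    ({q | P q} : Finset _) = ({q | P (q.1.castSucc, q.2.castSucc)} : Finset (Fin m × Fin m)).map
      (Fin.castSuccEmb.prodMap Fin.castSuccEmb) := by
  ext ⟨a, b⟩
  simp only [mem_filter, mem_univ, true_and, mem_map, Function.Embedding.coe_prodMap,
    Fin.coe_castSuccEmb, Prod.exists, Prod.map, Prod.mk.injEq]
  constructor
  · intro h
    obtain ⟨ha, hb⟩ := hP _ h
    obtain ⟨a', rfl⟩ := Fin.exists_castSucc_eq.2 ha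
    obtain ⟨b', rfl⟩ := Fin.exists_castSucc_eq.2 hb
    exact ⟨a', b', h, rfl, rfl⟩
  · rintro ⟨a', b', h, rfl, rfl⟩
    exact h

lemma descPairs_extendLast (τ : Perm (Fin m)) :
    descPairs (m + 1) (extendLast τ) =
      (descPairs m τ).map (Fin.castSuccEmb.prodMap Fin.castSuccEmb) := by
  rw [descPairs, filter_eq_map_castSucc]
  · simp [descPairs]
  · rintro ⟨a, b⟩ ⟨hab, hlt⟩
    dsimp only at hab hlt ⊢
    refine ⟨fun ha => ?_, fun hb => ?_⟩
    · subst ha; have := b.isLt; simp only [Fin.val_last] at hab; omega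
    · subst hb; rw [extendLast_last] at hlt; exact (Fin.le_last _).not_gt hlt

lemma maj_extendLast (τ : Perm (Fin m)) : maj (m + 1) (extendLast τ) = maj m τ := by
  simp [maj, descPairs_extendLast]

lemma descWeight_extendLast (τ : Perm (Fin m)) :
    descWeight (m + 1) (extendLast τ) = descWeight m τ + maj m τ := by
  rw [descWeight, descPairs_extendLast, sum_map, descWeight, maj, ← sum_add_distrib]
  refine sum_congr rfl fun q _ => ?_
  have := q.1.isLt
  simp only [Function.Embedding.coe_prodMap, Fin.coe_castSuccEmb, Prod.map_fst, Fin.val_castSucc]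
  rw [show m + 1 - q.1.val = (m - q.1.val) + 1 by omega]
  ring

lemma inv_extendLast (τ : Perm (Fin m)) : inv (m + 1) (extendLast τ) = inv m τ := by
  rw [inv, filter_eq_map_castSucc, card_map]
  · simp [inv]
  · rintro ⟨a, b⟩ ⟨hab, hlt⟩
    dsimp only at hab hlt ⊢
    refine ⟨fun ha => ?_, fun hb => ?_⟩
    · subst ha; exact (Fin.le_last _).not_gt hab
    · subst hb; rw [extendLast_last] at hlt; exact (Fin.le_last _).not_gt hlt

open Fin.NatCast in
lemma finRotate_inv_pow_apply (j : ℕ) (x : Fin (m + 1)) :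
    ((finRotate (m + 1))⁻¹ ^ j) x = x - (j : Fin (m + 1)) := by
  induction j with
  | zero => simp
  | succ j ih => rw [pow_succ', Perm.mul_apply, ih, Perm.inv_def, finRotate_symm_apply,
      Nat.cast_succ, sub_sub]

open Fin.NatCast in
lemma stats_finRotate_inv_pow_mul_extendLast (τ : Perm (Fin m)) {j : ℕ} (hj : j ≤ m) :
    maj (m + 1) ((finRotate (m + 1))⁻¹ ^ j * extendLast τ) = maj m τ + j ∧
      (descWeight (m + 1) ((finRotate (m + 1))⁻¹ ^ j * extendLast τ) : ℤ) -
          inv (m + 1) ((finRotate (m + 1))⁻¹ ^ j * extendLast τ) =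
        descWeight m τ - inv m τ + maj m τ + j := by
  induction j with
  | zero =>
    simp only [pow_zero, one_mul, maj_extendLast, descWeight_extendLast, inv_extendLast]
    exact ⟨rfl, by push_cast; ring⟩
  | succ j ih =>
    set σ := (finRotate (m + 1))⁻¹ ^ (j + 1) * extendLast τ
    have hrot : finRotate (m + 1) * σ = (finRotate (m + 1))⁻¹ ^ j * extendLast τ := by
      simp only [σ, pow_succ', mul_assoc, mul_inv_cancel_left]
    have hσ : σ (Fin.last m) ≠ Fin.last m := by
      rw [Perm.mul_apply, extendLast_last, finRotate_inv_pow_apply, Ne, sub_eq_self,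
        Fin.natCast_eq_zero]
      exact Nat.not_dvd_of_pos_of_lt j.succ_pos (by omega)
    obtain ⟨hmaj, hsiz⟩ := ih (by omega)
    rw [← hrot] at hmaj hsiz
    refine ⟨by rw [maj_finRotate_mul σ hσ, hmaj]; ring, ?_⟩
    rw [descWeight_sub_inv_finRotate_mul σ hσ, hsiz]
    push_cast
    ring

def rotateExtend (m : ℕ) (x : Perm (Fin m) × Fin (m + 1)) : Perm (Fin (m + 1)) :=
  (finRotate (m + 1))⁻¹ ^ (x.2 : ℕ) * extendLast x.1

lemma rotateExtend_apply_last (τ : Perm (Fin m)) (j : Fin (m + 1)) :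
    rotateExtend m (τ, j) (Fin.last m) = Fin.last m - j := by
  rw [rotateExtend, Perm.mul_apply, extendLast_last, finRotate_inv_pow_apply,
    Fin.cast_val_eq_self]

lemma rotateExtend_injective : Function.Injective (rotateExtend m) := by
  rintro ⟨τ, j⟩ ⟨τ', j'⟩ h
  have hj : j = j' := by
    simpa [rotateExtend_apply_last] using congrArg (· (Fin.last m)) h
  subst hj
  exact congrArg (·, j) (extendLast_injective (mul_left_cancel h))

lemma rotateExtend_bijective : Function.Bijective (rotateExtend m) := by
  rw [Fintype.bijective_iff_injective_and_card]
  refine ⟨rotateExtend_injective, ?_⟩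
  simp [Fintype.card_perm, Nat.factorial_succ, mul_comm]

lemma maj_rotateExtend (τ : Perm (Fin m)) (j : Fin (m + 1)) :
    maj (m + 1) (rotateExtend m (τ, j)) = maj m τ + j :=
  (stats_finRotate_inv_pow_mul_extendLast τ (Nat.lt_succ_iff.1 j.isLt)).1

lemma descWeight_sub_inv_rotateExtend (τ : Perm (Fin m)) (j : Fin (m + 1)) :
    (descWeight (m + 1) (rotateExtend m (τ, j)) : ℤ) - inv (m + 1) (rotateExtend m (τ, j)) =
      descWeight m τ - inv m τ + maj m τ + j :=
  (stats_finRotate_inv_pow_mul_extendLast τ (Nat.lt_succ_iff.1 j.isLt)).2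

lemma inv_le_descWeight (n : ℕ) (σ : Perm (Fin n)) : inv n σ ≤ descWeight n σ := by
  induction n with
  | zero => simp [inv]
  | succ m ih =>
    obtain ⟨⟨τ, j⟩, rfl⟩ := rotateExtend_bijective.2 σ
    have := descWeight_sub_inv_rotateExtend τ j
    have := ih τ
    omega

lemma siz_rotateExtend (τ : Perm (Fin m)) (j : Fin (m + 1)) :
    siz (m + 1) (rotateExtend m (τ, j)) = siz m τ + maj m τ + j := by
  have := descWeight_sub_inv_rotateExtend τ j
  have := inv_le_descWeight m τ
  have := inv_le_descWeight (m + 1) (rotateExtend m (τ, j))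
  rw [siz_eq_descWeight_sub_inv, siz_eq_descWeight_sub_inv]
  omega

theorem sum_pow_siz_mul_pow_maj {R : Type*} [CommSemiring R] (n : ℕ) (x y : R) :
    ∑ σ : Perm (Fin n), x ^ siz n σ * y ^ maj n σ =
      ∏ k ∈ Icc 1 n, ∑ j ∈ range k, (x ^ (n + 1 - k) * y) ^ j := by
  induction n generalizing y with
  | zero => simp [siz, maj, descPairs]
  | succ m ih =>
    calc ∑ σ : Perm (Fin (m + 1)), x ^ siz (m + 1) σ * y ^ maj (m + 1) σ
        = ∑ τ : Perm (Fin m), ∑ j : Fin (m + 1),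
            x ^ siz (m + 1) (rotateExtend m (τ, j)) * y ^ maj (m + 1) (rotateExtend m (τ, j)) := by
          rw [← Fintype.sum_prod_type']
          exact (Fintype.sum_bijective _ rotateExtend_bijective _ _ fun _ => rfl).symm
      _ = (∑ τ : Perm (Fin m), x ^ siz m τ * (x * y) ^ maj m τ) *
            ∑ j ∈ range (m + 1), (x * y) ^ j := by
          simp only [sum_mul_sum, siz_rotateExtend, maj_rotateExtend]
          refine sum_congr rfl fun τ _ => ?_
          rw [← Fin.sum_univ_eq_sum_range]
          refine sum_congr rfl fun j _ => ?_
          ring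
      _ = _ := by
          rw [ih, prod_Icc_succ_top (by omega), Nat.add_sub_cancel_left, pow_one]
          congr 1
          refine prod_congr rfl fun k hk => ?_
          rw [show m + 1 + 1 - k = (m + 1 - k) + 1 by have := (mem_Icc.1 hk).2; omega]
          exact sum_congr rfl fun j _ => by ring

end SizMaj

theorem stmt17_general (n : ℕ) :
    (∑ σ : Equiv.Perm (Fin n),
        (MvPolynomial.X 0 : MvPolynomial (Fin 2) ℤ) ^ siz n σ *
          MvPolynomial.X 1 ^ maj n σ)
      = ∏ k ∈ Finset.Icc 1 n, ∑ j ∈ Finset.range k,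
          ((MvPolynomial.X 0 : MvPolynomial (Fin 2) ℤ) ^ (n + 1 - k) *
            MvPolynomial.X 1) ^ j :=
  SizMaj.sum_pow_siz_mul_pow_maj n _ _

/-- `Σ_{σ ∈ S_n} q^{siz(σ)} t^{maj(σ)} = Π_{k=1}^n [k]_{q^{n+1−k} t}`,
with `q = X 0`, `t = X 1`. -/
theorem stmt17 (n : ℕ) (hn : 1 ≤ n) :
    (∑ σ : Equiv.Perm (Fin n),
        (MvPolynomial.X 0 : MvPolynomial (Fin 2) ℤ) ^ siz n σ *
          MvPolynomial.X 1 ^ maj n σ)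
      = ∏ k ∈ Finset.Icc 1 n, ∑ j ∈ Finset.range k,
          ((MvPolynomial.X 0 : MvPolynomial (Fin 2) ℤ) ^ (n + 1 - k) *
            MvPolynomial.X 1) ^ j :=
  stmt17_general n
end

section
/- Let n ≥ 1. For 2 ≤ k ≤ n let C_k⁻ ∈ S_n be the decreasing k-cycle defined by C_k⁻(1) = k, C_k⁻(i) = i − 1 for 2 ≤ i ≤ k, and C_k⁻(i) = i for i > k. For any sequence (a_2, …, a_n) of integers with 0 ≤ a_i < i for each i, let LD(a) = (C_n⁻)^{a_n} ∘ (C_{n−1}⁻)^{a_{n−1}} ∘ ⋯ ∘ (C_2⁻)^{a_2} ∈ S_n. Then maj(LD(a)) = Σ_{i=2}^{n} a_i and siz(LD(a)) = Σ_{i=2}^{n} (n+1−i)·a_i. -/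
/-!
Left multiplication by `C_m⁻` acts on values: it sends `0` to `m - 1` and lowers `1, …, m - 1`
by one, so it keeps the relative order of all values except `0`, which jumps from the bottom to
the top of the block `[0, m)`. If `τ` permutes only the positions `[0, m)` and `0` sits at a
position `z` with `z + 1 < m`, the descent at `z` (1-indexed) therefore moves to `z + 1`, and the
`z` inversions `(i, z)` are traded for the `m - 1 - z` inversions `(z, j)` with `j < m`. Hence
`maj` rises by `1` and `siz` by `(n - 2z) - (m - 1 - 2z) = n + 1 - m`. In `LD(a)` the power
`(C_m⁻)^{a_m}` acts on a permutation fixing the positions `≥ m - 1`; each factor lowers the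
value at position `m - 1` by one, so it stays nonzero and the step applies `a_m < m` times.
-/

open Equiv Finset

/-- `C_m⁻` in 0-indexed form. -/
def IsDecCycle {n : ℕ} (m : ℕ) (c : Perm (Fin n)) : Prop :=
  ∀ i : Fin n, (c i).val = if i.val = 0 then m - 1 else if i.val < m then i.val - 1 else i.val

namespace IsDecCycle

variable {n m : ℕ} {c : Perm (Fin n)}

theorem lt_iff_lt (hc : IsDecCycle m c) {u v : Fin n} (hu : u.val ≠ 0) (hv : v.val ≠ 0) :
    c u < c v ↔ u < v := by
  rw [Fin.lt_def, Fin.lt_def, hc u, hc v]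
  split_ifs <;> omega

theorem apply_of_le (hc : IsDecCycle m c) {u : Fin n} (hu : m ≤ u.val) : c u = u :=
  Fin.ext <| by rw [hc u]; split_ifs <;> omega

theorem pow_apply_of_le (hc : IsDecCycle m c) {u : Fin n} (hu : m ≤ u.val) (t : ℕ) :
    (c ^ t) u = u := by
  induction t with
  | zero => rfl
  | succ t ih => rw [pow_succ', Perm.mul_apply, ih, hc.apply_of_le hu]

theorem val_pow_apply_of_eq_pred (hc : IsDecCycle m c) {u : Fin n} (hu : u.val = m - 1) {t : ℕ}
    (ht : t ≤ m - 1) : ((c ^ t) u).val = m - 1 - t := by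
  induction t with
  | zero => simpa using hu
  | succ t ih =>
    rw [pow_succ', Perm.mul_apply, hc, ih (by omega)]
    split_ifs <;> omega

end IsDecCycle

section Statistics

variable {n : ℕ}

/-- `Σ_{d ∈ DES(σ)} w d`, over the 1-indexed descent positions `d`. -/
def descSum (w : ℕ → ℕ) (σ : Perm (Fin n)) : ℕ :=
  ∑ p ∈ descPairs n σ, w (p.1.val + 1)

theorem maj_eq_descSum (σ : Perm (Fin n)) : maj n σ = descSum id σ := rfl

def sizWeight (n d : ℕ) : ℕ := (n + 1 - d) * d

theorem siz_eq_descSum_sub_inv (σ : Perm (Fin n)) :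
    siz n σ = descSum (sizWeight n) σ - inv n σ := by
  simp only [siz, descSum, sizWeight, Nat.add_sub_add_right]

theorem descPairs_one : descPairs n 1 = ∅ :=
  filter_eq_empty_iff.mpr fun p _ h => by
    rw [Perm.one_apply, Perm.one_apply, Fin.lt_def] at h
    omega

theorem descSum_one (w : ℕ → ℕ) : descSum w (1 : Perm (Fin n)) = 0 := by
  rw [descSum, descPairs_one, sum_empty]

theorem inv_perm_one : inv n 1 = 0 :=
  card_eq_zero.mpr <| filter_eq_empty_iff.mpr fun _ _ h => h.1.not_gt h.2

end Statistics

section PairCounting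

variable {n : ℕ}

theorem sum_adjacent_snd_eq (w : ℕ → ℕ) (hw : w 0 = 0) (z : Fin n) :
    ∑ p ∈ univ.filter (fun p : Fin n × Fin n => p.2.val = p.1.val + 1 ∧ p.2 = z),
      w (p.1.val + 1) = w z.val := by
  rcases Nat.eq_zero_or_pos z.val with hz | hz
  · rw [hz, hw]
    refine sum_eq_zero fun p hp => ?_
    simp only [mem_filter, mem_univ, true_and] at hp
    omega
  · have : univ.filter (fun p : Fin n × Fin n => p.2.val = p.1.val + 1 ∧ p.2 = z) =
        {(⟨z.val - 1, by omega⟩, z)} := by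
      ext ⟨i, j⟩
      simp only [mem_filter, mem_univ, true_and, mem_singleton, Prod.mk.injEq, Fin.ext_iff]
      omega
    rw [this, sum_singleton]
    exact congrArg w (Nat.sub_add_cancel hz)

theorem sum_adjacent_fst_eq (w : ℕ → ℕ) {m : ℕ} {z : Fin n} (hz : z.val + 1 < m)
    (hm : m ≤ n) :
    ∑ p ∈ univ.filter
        (fun p : Fin n × Fin n => p.2.val = p.1.val + 1 ∧ p.1 = z ∧ p.2.val < m),
      w (p.1.val + 1) = w (z.val + 1) := by
  have : univ.filter
      (fun p : Fin n × Fin n => p.2.val = p.1.val + 1 ∧ p.1 = z ∧ p.2.val < m) =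
      {(z, ⟨z.val + 1, by omega⟩)} := by
    ext ⟨i, j⟩
    simp only [mem_filter, mem_univ, true_and, mem_singleton, Prod.mk.injEq, Fin.ext_iff]
    omega
  rw [this, sum_singleton]

theorem card_lt_snd_eq (z : Fin n) :
    #(univ.filter fun p : Fin n × Fin n => p.1 < p.2 ∧ p.2 = z) = z.val := by
  have : univ.filter (fun p : Fin n × Fin n => p.1 < p.2 ∧ p.2 = z) = Iio z ×ˢ {z} := by
    ext ⟨i, j⟩
    simp only [mem_filter, mem_univ, true_and, mem_product, mem_Iio, mem_singleton]
    constructor <;> rintro ⟨h, rfl⟩ <;> exact ⟨h, rfl⟩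
  rw [this, card_product, Fin.card_Iio, card_singleton, mul_one]

theorem card_fst_lt_lt_eq {m : ℕ} {z : Fin n} (hz : z.val < m) (hm : m ≤ n) :
    #(univ.filter fun p : Fin n × Fin n => p.1 < p.2 ∧ p.1 = z ∧ p.2.val < m) =
      m - 1 - z.val := by
  have : univ.filter (fun p : Fin n × Fin n => p.1 < p.2 ∧ p.1 = z ∧ p.2.val < m) =
      {z} ×ˢ Ioc z ⟨m - 1, by omega⟩ := by
    ext ⟨i, j⟩
    simp only [mem_filter, mem_univ, true_and, mem_product, mem_Ioc, mem_singleton, Fin.lt_def,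
      Fin.le_def, Fin.ext_iff]
    omega
  rw [this, card_product, card_singleton, one_mul, Fin.card_Ioc]

theorem sizWeight_succ_add {n k : ℕ} (hk : k < n) :
    sizWeight n (k + 1) + 2 * k = sizWeight n k + n := by
  rw [sizWeight, sizWeight]
  obtain ⟨y, rfl⟩ : ∃ y, n = k + 1 + y := ⟨n - (k + 1), by omega⟩
  rw [show k + 1 + y + 1 - (k + 1) = y + 1 by omega, show k + 1 + y + 1 - k = y + 2 by omega]
  ring

end PairCounting

section LeftMulDecCycle

variable {n m : ℕ} {c τ : Perm (Fin n)} {z : Fin n}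

theorem val_apply_lt_of_fixes (hτ : ∀ i : Fin n, m ≤ i.val → τ i = i) {i : Fin n}
    (hi : i.val < m) : (τ i).val < m := by
  by_contra h
  have := τ.injective (hτ (τ i) (not_lt.mp h))
  omega

theorem val_apply_ne_zero_of_ne (hz : (τ z).val = 0) {i : Fin n} (hi : i ≠ z) :
    (τ i).val ≠ 0 :=
  fun h => hi (τ.injective (Fin.ext (h.trans hz.symm)))

theorem apply_lt_apply_of_val_eq_zero (hz : (τ z).val = 0) {i : Fin n} (hi : i ≠ z) :
    τ z < τ i := by
  rw [Fin.lt_def, hz]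
  exact Nat.pos_of_ne_zero (val_apply_ne_zero_of_ne hz hi)

theorem IsDecCycle.mul_apply_lt_mul_apply_iff (hc : IsDecCycle m c) (hz : (τ z).val = 0)
    {i j : Fin n} (hi : i ≠ z) (hj : j ≠ z) : (c * τ) i < (c * τ) j ↔ τ i < τ j :=
  hc.lt_iff_lt (val_apply_ne_zero_of_ne hz hi) (val_apply_ne_zero_of_ne hz hj)

theorem IsDecCycle.mul_apply_lt_mul_apply_self_iff (hc : IsDecCycle m c)
    (hτ : ∀ i : Fin n, m ≤ i.val → τ i = i) (hz : (τ z).val = 0) {j : Fin n}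
    (hj : j ≠ z) :
    (c * τ) j < (c * τ) z ↔ j.val < m := by
  have hj0 := val_apply_ne_zero_of_ne hz hj
  rw [Perm.mul_apply, Perm.mul_apply, Fin.lt_def, hc, hc, hz]
  by_cases hjm : j.val < m
  · have := val_apply_lt_of_fixes hτ hjm
    split_ifs <;> omega
  · rw [hτ j (not_lt.mp hjm)]
    split_ifs <;> omega

/-- Comparisons away from position `z` are unchanged, while the value at `z` goes from the
minimum of the block `[0, m)` to its maximum. -/
theorem IsDecCycle.sum_filter_mul_add_eq (hc : IsDecCycle m c)
    (hτ : ∀ i : Fin n, m ≤ i.val → τ i = i) (hz : (τ z).val = 0) (hzm : z.val < m)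
    (R : Fin n × Fin n → Prop) [DecidablePred R] (hR : ∀ p, R p → p.1 < p.2)
    (f : Fin n × Fin n → ℕ) :
    ∑ p ∈ univ.filter (fun p => R p ∧ (c * τ) p.2 < (c * τ) p.1), f p +
        ∑ p ∈ univ.filter (fun p => R p ∧ p.2 = z), f p =
      ∑ p ∈ univ.filter (fun p => R p ∧ τ p.2 < τ p.1), f p +
        ∑ p ∈ univ.filter (fun p => R p ∧ p.1 = z ∧ p.2.val < m), f p := by
  have hzlt : ∀ {i : Fin n}, i ≠ z → i.val < z.val → (c * τ) i < (c * τ) z :=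
    fun hi hiz => (hc.mul_apply_lt_mul_apply_self_iff hτ hz hi).mpr (by omega)
  rw [← sum_union, ← sum_union]
  · congr 1
    ext ⟨i, j⟩
    simp only [mem_union, mem_filter, mem_univ, true_and]
    by_cases hij : R (i, j)
    · have hlt : i < j := hR _ hij
      by_cases hi : i = z
      · subst hi
        have hj : j ≠ i := hlt.ne'
        simp only [hij, hj, hc.mul_apply_lt_mul_apply_self_iff hτ hz hj,
          (apply_lt_apply_of_val_eq_zero hz hj).not_gt, true_and, and_false, or_false, false_or]
      by_cases hj : j = z
      · subst hj
        simp only [hij, hi, (hzlt hi hlt).not_gt, apply_lt_apply_of_val_eq_zero hz hi, and_self,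
          false_and, and_false, or_false, false_or]
      · simp only [hij, hi, hj, hc.mul_apply_lt_mul_apply_iff hz hj hi, true_and, false_and,
          or_false]
    · simp only [hij, false_and, or_self]
  · refine disjoint_filter.mpr fun ⟨i, j⟩ _ hp hpz => hp.2.not_gt ?_
    obtain rfl : i = z := hpz.2.1
    exact apply_lt_apply_of_val_eq_zero hz (hR _ hp.1).ne'
  · refine disjoint_filter.mpr fun ⟨i, j⟩ _ hp hpz => hp.2.not_gt ?_
    obtain rfl : j = z := hpz.2
    exact hzlt (hR _ hp.1).ne (hR _ hp.1)

theorem exists_val_apply_eq_zero (hτ : ∀ i : Fin n, m ≤ i.val → τ i = i) (hm : 0 < m)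
    (hmn : m ≤ n) (hlast : ∀ i : Fin n, i.val + 1 = m → (τ i).val ≠ 0) :
    ∃ z : Fin n, (τ z).val = 0 ∧ z.val + 1 < m := by
  set z := τ.symm ⟨0, by omega⟩
  have hz : (τ z).val = 0 := by simp [z]
  have hzm : z.val < m := by
    by_contra h
    rw [hτ z (not_lt.mp h)] at hz
    omega
  exact ⟨z, hz, lt_of_le_of_ne hzm fun h => hlast z h hz⟩

theorem IsDecCycle.descSum_mul_add (hc : IsDecCycle m c)
    (hτ : ∀ i : Fin n, m ≤ i.val → τ i = i) (hz : (τ z).val = 0) (hzm : z.val + 1 < m)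
    (hmn : m ≤ n) (w : ℕ → ℕ) (hw : w 0 = 0) :
    descSum w (c * τ) + w z.val = descSum w τ + w (z.val + 1) := by
  have := hc.sum_filter_mul_add_eq hτ hz (by omega) (fun p => p.2.val = p.1.val + 1)
    (fun p hp => Fin.lt_def.mpr (by omega)) (fun p => w (p.1.val + 1))
  rwa [sum_adjacent_snd_eq w hw, sum_adjacent_fst_eq w hzm hmn] at this

theorem IsDecCycle.inv_mul_add (hc : IsDecCycle m c)
    (hτ : ∀ i : Fin n, m ≤ i.val → τ i = i) (hz : (τ z).val = 0) (hzm : z.val < m)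
    (hmn : m ≤ n) :
    inv n (c * τ) + z.val = inv n τ + (m - 1 - z.val) := by
  have := hc.sum_filter_mul_add_eq hτ hz hzm (fun p => p.1 < p.2) (fun _ h => h) (fun _ => 1)
  simp only [← card_eq_sum_ones] at this
  rwa [card_lt_snd_eq, card_fst_lt_lt_eq hzm hmn] at this

theorem IsDecCycle.maj_mul (hc : IsDecCycle m c)
    (hτ : ∀ i : Fin n, m ≤ i.val → τ i = i) (hz : (τ z).val = 0) (hzm : z.val + 1 < m)
    (hmn : m ≤ n) :
    maj n (c * τ) = maj n τ + 1 := by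
  have := hc.descSum_mul_add hτ hz hzm hmn id rfl
  rw [maj_eq_descSum, maj_eq_descSum]
  simp only [id] at this
  omega

theorem IsDecCycle.descSum_sizWeight_mul (hc : IsDecCycle m c)
    (hτ : ∀ i : Fin n, m ≤ i.val → τ i = i) (hz : (τ z).val = 0) (hzm : z.val + 1 < m)
    (hmn : m ≤ n) {K : ℕ}
    (hK : descSum (sizWeight n) τ = inv n τ + K) :
    descSum (sizWeight n) (c * τ) = inv n (c * τ) + (K + (n + 1 - m)) := by
  have hdesc := hc.descSum_mul_add hτ hz hzm hmn (sizWeight n) (by simp [sizWeight])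
  have hinv := hc.inv_mul_add hτ hz (by omega) hmn
  have := sizWeight_succ_add z.isLt
  omega

theorem IsDecCycle.stats_pow_mul (hc : IsDecCycle m c) (hmn : m ≤ n) {σ : Perm (Fin n)}
    (hσ : ∀ i : Fin n, m - 1 ≤ i.val → σ i = i) {K : ℕ}
    (hK : descSum (sizWeight n) σ = inv n σ + K) {t : ℕ} (ht : t ≤ m - 1) :
    maj n (c ^ t * σ) = maj n σ + t ∧
      descSum (sizWeight n) (c ^ t * σ) =
        inv n (c ^ t * σ) + (K + (n + 1 - m) * t) := by
  induction t with
  | zero => simpa using hK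
  | succ t ih =>
    obtain ⟨ihmaj, ihsiz⟩ := ih (by omega)
    have hτ : ∀ i : Fin n, m ≤ i.val → (c ^ t * σ) i = i := fun i hi => by
      rw [Perm.mul_apply, hσ i (by omega), hc.pow_apply_of_le hi]
    have hlast : ∀ i : Fin n, i.val + 1 = m → ((c ^ t * σ) i).val ≠ 0 := fun i hi => by
      rw [Perm.mul_apply, hσ i (by omega), hc.val_pow_apply_of_eq_pred (by omega) (by omega)]
      omega
    obtain ⟨z, hz, hzm⟩ := exists_val_apply_eq_zero hτ (by omega) hmn hlast
    rw [pow_succ', mul_assoc, hc.maj_mul hτ hz hzm hmn,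
      hc.descSum_sizWeight_mul hτ hz hzm hmn ihsiz, ihmaj]
    constructor <;> ring

end LeftMulDecCycle

section LeftDecreasing

variable {n : ℕ} (C : ℕ → Perm (Fin n)) (a : ℕ → ℕ)

/-- `(C_k⁻)^{a_k} ∘ ⋯ ∘ (C_2⁻)^{a_2}`, so that `LD(a) = ldProd C a n`. -/
def ldProd (k : ℕ) : Perm (Fin n) :=
  ((List.range (k - 1)).map fun j => C (k - j) ^ a (k - j)).prod

theorem ldProd_of_le_one {k : ℕ} (hk : k ≤ 1) : ldProd C a k = 1 := by
  rw [ldProd, Nat.sub_eq_zero_of_le hk, List.range_zero, List.map_nil, List.prod_nil]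

theorem ldProd_add_two (k : ℕ) :
    ldProd C a (k + 2) = C (k + 2) ^ a (k + 2) * ldProd C a (k + 1) := by
  rw [ldProd, ldProd, show k + 2 - 1 = k + 1 by omega, List.range_succ_eq_map, List.map_cons,
    List.prod_cons, List.map_map, Nat.add_sub_cancel]
  refine congrArg _ (congrArg List.prod (List.map_congr_left fun j _ => ?_))
  rw [Function.comp_apply, show k + 2 - (j + 1) = k + 1 - j by omega]

variable {C a}

theorem ldProd_apply_of_le (hC : ∀ k, 2 ≤ k → k ≤ n → IsDecCycle k (C k)) {k : ℕ}
    (hk : k ≤ n) {i : Fin n} (hi : k ≤ i.val) : ldProd C a k i = i := by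
  have : ldProd C a k ∈ MulAction.stabilizer (Perm (Fin n)) i := by
    refine Subgroup.list_prod_mem _ fun g hg => ?_
    obtain ⟨j, hj, rfl⟩ := List.mem_map.mp hg
    rw [List.mem_range] at hj
    refine Subgroup.pow_mem _ ?_ _
    exact (hC (k - j) (by omega) (by omega)).apply_of_le (by omega)
  exact this

theorem stats_ldProd (hC : ∀ k, 2 ≤ k → k ≤ n → IsDecCycle k (C k))
    (ha : ∀ i, 2 ≤ i → i ≤ n → a i < i) {k : ℕ} (hk : k ≤ n) :
    maj n (ldProd C a k) = ∑ i ∈ Icc 2 k, a i ∧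
      descSum (sizWeight n) (ldProd C a k) =
        inv n (ldProd C a k) + ∑ i ∈ Icc 2 k, (n + 1 - i) * a i := by
  induction k with
  | zero => simp [ldProd_of_le_one, maj_eq_descSum, descSum_one, inv_perm_one]
  | succ k ih =>
    rcases k with _ | k
    · simp [ldProd_of_le_one, maj_eq_descSum, descSum_one, inv_perm_one]
    obtain ⟨ihmaj, ihsiz⟩ := ih (by omega)
    obtain ⟨hmaj, hsiz⟩ := (hC (k + 2) le_add_self hk).stats_pow_mul hk
      (σ := ldProd C a (k + 1)) (fun i hi => ldProd_apply_of_le hC (by omega) hi) ihsiz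
      (t := a (k + 2)) (by have := ha (k + 2) le_add_self hk; omega)
    rw [ldProd_add_two, sum_Icc_succ_top (b := k + 1) (by omega),
      sum_Icc_succ_top (b := k + 1) (by omega), hmaj, hsiz, ihmaj]
    exact ⟨rfl, by ring⟩

end LeftDecreasing

theorem stmt18_general (n : ℕ) (C : ℕ → Equiv.Perm (Fin n))
    (hC : ∀ k, 2 ≤ k → k ≤ n → ∀ i : Fin n,
      ((C k) i).val = if i.val = 0 then k - 1 else if i.val < k then i.val - 1 else i.val)
    (a : ℕ → ℕ) (ha : ∀ i, 2 ≤ i → i ≤ n → a i < i) :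
    maj n (((List.range (n - 1)).map fun j => C (n - j) ^ a (n - j)).prod)
        = ∑ i ∈ Finset.Icc 2 n, a i ∧
    siz n (((List.range (n - 1)).map fun j => C (n - j) ^ a (n - j)).prod)
        = ∑ i ∈ Finset.Icc 2 n, (n + 1 - i) * a i := by
  obtain ⟨hmaj, hsiz⟩ := stats_ldProd hC ha le_rfl
  refine ⟨hmaj, ?_⟩
  rw [siz_eq_descSum_sub_inv]
  exact Nat.sub_eq_of_eq_add' hsiz

/-- for the decreasing cycles `C k` (in 1-indexed terms `C_k(1) = k`,
`C_k(i) = i−1` for `2 ≤ i ≤ k`, `C_k(i) = i` for `i > k`; here written 0-indexed on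
`Fin n`) and any `0 ≤ a_i < i`, the left-decreasing factorization
`LD(a) = C_n^{a_n} ∘ ⋯ ∘ C_2^{a_2}` satisfies `maj(LD(a)) = Σ a_i` and
`siz(LD(a)) = Σ (n+1−i)·a_i`. -/
theorem stmt18 (n : ℕ) (hn : 1 ≤ n) (C : ℕ → Equiv.Perm (Fin n))
    (hC : ∀ k, 2 ≤ k → k ≤ n → ∀ i : Fin n,
      ((C k) i).val = if i.val = 0 then k - 1 else if i.val < k then i.val - 1 else i.val)
    (a : ℕ → ℕ) (ha : ∀ i, 2 ≤ i → i ≤ n → a i < i) :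
    maj n (((List.range (n - 1)).map fun j => C (n - j) ^ a (n - j)).prod)
        = ∑ i ∈ Finset.Icc 2 n, a i ∧
    siz n (((List.range (n - 1)).map fun j => C (n - j) ^ a (n - j)).prod)
        = ∑ i ∈ Finset.Icc 2 n, (n + 1 - i) * a i :=
  stmt18_general n C hC a ha
end
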